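/- arXiv:math/0212191 — 3 statements merged into one kernel-verified Lean document; each statement's English description precedes it below -/
import Mathlib

section
/- For a positive integer m, let q(m) denote the probability that m independent uniformly random elements of H generate a subgroup of H that acts transitively on X. Let j ≥ 1 and let G be the subgroup of Γ(H) abstractly generated by j independent Haar random elements. Then for every n ≥ 1, the probability that G acts transitively on level n of the tree T equals the product ∏_{ℓ=0}^{n−1} q(1 + (j−1)|X|^ℓ). -/
namespace TreeWreath

/-- The infinite iterated (permutational) wreath product `Γ(H)` of a permutation
group `H ⊆ Sym(X)`, realized as the subgroup of permutations of the vertex set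
`List X` of the rooted tree (the root is `[]`, the children of `v` are the
`v ++ [x]`) whose local action at every vertex belongs to `H`. -/
def wreath (X : Type*) (H : Subgroup (Equiv.Perm X)) : Subgroup (Equiv.Perm (List X)) where
  carrier := {g | g [] = [] ∧ ∀ v : List X, ∃ σ ∈ H, ∀ x : X, g (v ++ [x]) = g v ++ [σ x]}
  one_mem' := ⟨rfl, fun _ => ⟨1, one_mem H, fun _ => rfl⟩⟩
  mul_mem' := by
    rintro g h ⟨hg0, hg⟩ ⟨hh0, hh⟩
    refine ⟨by simp [Equiv.Perm.mul_apply, hh0, hg0], fun v => ?_⟩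
    obtain ⟨τ, hτH, hτ⟩ := hh v
    obtain ⟨σ, hσH, hσ⟩ := hg (h v)
    exact ⟨σ * τ, mul_mem hσH hτH, fun x => by
      simp [Equiv.Perm.mul_apply, hτ, hσ]⟩
  inv_mem' := by
    rintro g ⟨hg0, hg⟩
    constructor
    · conv_lhs => rw [← hg0]
      exact Equiv.symm_apply_apply g []
    · intro v
      obtain ⟨σ, hσH, hσ⟩ := hg (g⁻¹ v)
      refine ⟨σ⁻¹, inv_mem hσH, fun x => ?_⟩
      have : g (g⁻¹ v ++ [σ⁻¹ x]) = v ++ [x] := by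
        rw [hσ]; simp
      rw [← this]
      exact Equiv.symm_apply_apply g _

theorem length_apply_of_mem_wreath {X : Type*} {H : Subgroup (Equiv.Perm X)}
    {g : Equiv.Perm (List X)} (hg : g ∈ wreath X H) (v : List X) :
    (g v).length = v.length := by
  induction v using List.reverseRecOn with
  | nil => rw [hg.1]
  | append_singleton v x ih =>
      obtain ⟨σ, _, hσ⟩ := hg.2 v
      rw [hσ]; simp [ih]

/-- The cyclic group `C_p` generated by the cycle `x ↦ x + 1` on `ZMod p`. -/
def cyclic (p : ℕ) : Subgroup (Equiv.Perm (ZMod p)) :=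
  Subgroup.zpowers (Equiv.addRight (1 : ZMod p))


/-- The group `Γ(p)` of `p`-adic automorphisms: the infinite iterated wreath
product of the cyclic group `C_p`, acting on the infinite rooted `p`-ary tree
whose vertices are the finite sequences over `ZMod p`. -/
def Gamma (p : ℕ) : Subgroup (Equiv.Perm (List (ZMod p))) :=
  wreath (ZMod p) (cyclic p)

/-- The action on the tree of a portrait `f` (an assignment of a permutation of
`X` to every vertex): coordinate `i+1` of `v` is moved by the permutation that
`f` assigns to the length-`i` prefix of `v`. -/
def act {X : Type*} (f : List X → Equiv.Perm X) : List X → List X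
  | [] => []
  | x :: v => f [] x :: act (fun u => f (x :: u)) v

/-- The inverse of `act f`. -/
def actInv {X : Type*} (f : List X → Equiv.Perm X) : List X → List X
  | [] => []
  | y :: w => (f [])⁻¹ y :: actInv (fun u => f ((f [])⁻¹ y :: u)) w

theorem act_actInv {X : Type*} (l : List X) :
    ∀ f : List X → Equiv.Perm X, act f (actInv f l) = l := by
  induction l with
  | nil => intro f; rfl
  | cons y w ih =>
      intro f
      simp only [actInv, act, ih, Equiv.Perm.inv_def, Equiv.apply_symm_apply]

theorem actInv_act {X : Type*} (l : List X) :
    ∀ f : List X → Equiv.Perm X, actInv f (act f l) = l := by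
  induction l with
  | nil => intro f; rfl
  | cons x v ih =>
      intro f
      simp only [act, actInv, Equiv.Perm.inv_def, Equiv.symm_apply_apply, ih]

/-- The tree automorphism determined by a portrait. -/
def toAut {X : Type*} (f : List X → Equiv.Perm X) : Equiv.Perm (List X) :=
  ⟨act f, actInv f, fun l => actInv_act l f, fun l => act_actInv l f⟩

theorem Equiv.Perm.apply_inv_self {α : Type*} (f : Equiv.Perm α) (x : α) : f (f⁻¹ x) = x :=
  Equiv.apply_symm_apply f x

theorem Equiv.Perm.inv_apply_self {α : Type*} (f : Equiv.Perm α) (x : α) : f⁻¹ (f x) = x :=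
  Equiv.symm_apply_apply f x

open MeasureTheory

noncomputable section

instance (X : Type*) : TopologicalSpace (Equiv.Perm X) := ⊥
instance (X : Type*) : DiscreteTopology (Equiv.Perm X) := ⟨rfl⟩

/-- The space of portraits with values in a permutation group `H ⊆ Sym(X)`:
the compact group `∏_{v ∈ T} H`.  Its normalized Haar measure is the product
of the uniform measures on `H`; a Haar random element of `Γ(H)` is obtained by
applying `toAut` to a Haar random element of this space (its local actions at
the vertices are independent and uniform in `H`). -/
abbrev Portrait (X : Type*) (H : Subgroup (Equiv.Perm X)) : Type _ := List X → ↥H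

instance (X : Type*) (H : Subgroup (Equiv.Perm X)) : IsTopologicalGroup ↥H where
  continuous_mul := continuous_of_discreteTopology
  continuous_inv := continuous_of_discreteTopology

instance (X : Type*) (H : Subgroup (Equiv.Perm X)) : MeasurableSpace (Portrait X H) :=
  borel _

instance (X : Type*) (H : Subgroup (Equiv.Perm X)) : BorelSpace (Portrait X H) := ⟨rfl⟩

/-- The Haar probability measure on the space of portraits: the distribution
of (the portrait of) a Haar random element of `Γ(H)`. -/
def haarPortrait (X : Type*) [Finite X] (H : Subgroup (Equiv.Perm X)) :
    Measure (Portrait X H) :=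
  Measure.haarMeasure ⊤

/-- The Haar random element of `Γ(H)` determined by a random portrait. -/
def randAut {X : Type*} {H : Subgroup (Equiv.Perm X)} (ω : Portrait X H) :
    Equiv.Perm (List X) :=
  toAut (fun v => (ω v : Equiv.Perm X))

end

/-- `q(m)`: the probability that `m` independent uniformly random elements of
`H` generate a subgroup acting transitively on `X` (uniform counting
probability on `H^m`). -/
noncomputable def transProb {X : Type*} (H : Subgroup (Equiv.Perm X)) (m : ℕ) : ℝ :=
  (Nat.card {t : Fin m → ↥H //
      ∀ x y : X, ∃ σ ∈ Subgroup.closure (Set.range fun i => ((t i : Equiv.Perm X))), σ x = y} : ℝ) /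
    ((Nat.card ↥H : ℝ) ^ m)

section Basics

open Equiv

variable {X : Type*} {H : Subgroup (Equiv.Perm X)}

theorem toAut_cons (f : List X → Equiv.Perm X) (x : X) (v : List X) :
    toAut f (x :: v) = f [] x :: toAut (fun u => f (x :: u)) v := rfl

theorem toAut_nil (f : List X → Equiv.Perm X) : toAut f [] = [] := rfl

theorem toAut_append (f : List X → Equiv.Perm X) (v : List X) (x : X) :
    toAut f (v ++ [x]) = toAut f v ++ [f v x] := by
  induction v generalizing f with
  | nil => rfl
  | cons y u ih => simp [toAut_cons, ih]

theorem toAut_mem_wreath {f : List X → Equiv.Perm X} (hf : ∀ v, f v ∈ H) :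
    toAut f ∈ wreath X H :=
  ⟨rfl, fun v => ⟨f v, hf v, fun x => toAut_append f v x⟩⟩

theorem portraitOf_congr' : True := trivial

theorem toAut_injective : Function.Injective (toAut (X := X)) := by
  intro f g h
  funext v
  apply Equiv.ext
  intro x
  have h2 : toAut f (v ++ [x]) = toAut g (v ++ [x]) := by rw [h]
  rw [toAut_append, toAut_append, h] at h2
  simpa using h2

noncomputable def portraitOf {g : Equiv.Perm (List X)} (hg : g ∈ wreath X H) (v : List X) :
    Equiv.Perm X := (hg.2 v).choose

theorem portraitOf_mem {g : Equiv.Perm (List X)} (hg : g ∈ wreath X H) (v : List X) :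
    portraitOf hg v ∈ H := (hg.2 v).choose_spec.1

theorem portraitOf_spec {g : Equiv.Perm (List X)} (hg : g ∈ wreath X H) (v : List X) (x : X) :
    g (v ++ [x]) = g v ++ [portraitOf hg v x] := (hg.2 v).choose_spec.2 x

theorem eq_toAut {g : Equiv.Perm (List X)} (hg : g ∈ wreath X H) :
    g = toAut (portraitOf hg) := by
  apply Equiv.ext
  intro v
  induction v using List.reverseRecOn with
  | nil => rw [hg.1, toAut_nil]
  | append_singleton u x ih => rw [portraitOf_spec hg u x, ih, toAut_append]

theorem portrait_unique {g : Equiv.Perm (List X)} (hg : g ∈ wreath X H)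
    (f : List X → Equiv.Perm X) (hf : ∀ v x, g (v ++ [x]) = g v ++ [f v x]) :
    f = portraitOf hg := by
  funext v
  apply Equiv.ext
  intro x
  have := (hf v x).symm.trans (portraitOf_spec hg v x)
  simpa using this

theorem portraitOf_toAut {f : List X → Equiv.Perm X} (hg : toAut f ∈ wreath X H) :
    portraitOf hg = f :=
  (portrait_unique hg f (fun v x => toAut_append f v x)).symm

noncomputable def rootOf {g : Equiv.Perm (List X)} (hg : g ∈ wreath X H) : Equiv.Perm X :=
  portraitOf hg []

noncomputable def locOf {g : Equiv.Perm (List X)} (hg : g ∈ wreath X H) (x : X) :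
    Equiv.Perm (List X) := toAut (fun v => portraitOf hg (x :: v))

theorem locOf_mem {g : Equiv.Perm (List X)} (hg : g ∈ wreath X H) (x : X) :
    locOf hg x ∈ wreath X H :=
  toAut_mem_wreath (fun v => portraitOf_mem hg (x :: v))

theorem apply_cons {g : Equiv.Perm (List X)} (hg : g ∈ wreath X H) (x : X) (v : List X) :
    g (x :: v) = rootOf hg x :: locOf hg x v := by
  conv_lhs => rw [eq_toAut hg]
  rfl

theorem apply_singleton {g : Equiv.Perm (List X)} (hg : g ∈ wreath X H) (x : X) :
    g [x] = [rootOf hg x] := by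
  rw [apply_cons hg x []]; rfl

theorem portraitOf_mul {g h : Equiv.Perm (List X)} (hg : g ∈ wreath X H) (hh : h ∈ wreath X H)
    (hgh : g * h ∈ wreath X H) (v : List X) :
    portraitOf hgh v = portraitOf hg (h v) * portraitOf hh v := by
  have hspec : ∀ v x, (g * h) (v ++ [x]) =
      (g * h) v ++ [(portraitOf hg (h v) * portraitOf hh v) x] := by
    intro v x
    show g (h (v ++ [x])) = g (h v) ++ [portraitOf hg (h v) (portraitOf hh v x)]
    rw [portraitOf_spec hh v x, portraitOf_spec hg (h v)]
  rw [← portrait_unique hgh _ hspec]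

theorem rootOf_mul {g h : Equiv.Perm (List X)} (hg : g ∈ wreath X H) (hh : h ∈ wreath X H)
    (hgh : g * h ∈ wreath X H) :
    rootOf hgh = rootOf hg * rootOf hh := by
  unfold rootOf
  rw [portraitOf_mul hg hh hgh, hh.1]

theorem locOf_mul {g h : Equiv.Perm (List X)} (hg : g ∈ wreath X H) (hh : h ∈ wreath X H)
    (hgh : g * h ∈ wreath X H) (x : X) :
    locOf hgh x = locOf hg (rootOf hh x) * locOf hh x := by
  apply Equiv.ext
  intro v
  have h1 : (g * h) (x :: v) = rootOf hgh x :: locOf hgh x v := apply_cons hgh x v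
  have h2 : (g * h) (x :: v) =
      rootOf hg (rootOf hh x) :: locOf hg (rootOf hh x) (locOf hh x v) := by
    show g (h (x :: v)) = _
    rw [apply_cons hh x v, apply_cons hg _ _]
  rw [h1] at h2
  have h3 := congrArg List.tail h2
  simpa using h3

theorem toAut_one : toAut (fun _ : List X => (1 : Equiv.Perm X)) = 1 := by
  apply Equiv.ext
  intro v
  induction v with
  | nil => rfl
  | cons x u ih => rw [toAut_cons]; simp only [Equiv.Perm.one_apply] at ih ⊢; rw [ih]

theorem portraitOf_one (h1 : (1 : Equiv.Perm (List X)) ∈ wreath X H) :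
    portraitOf h1 = fun _ => 1 :=
  (portrait_unique h1 _ (fun v x => by simp)).symm

theorem rootOf_one (h1 : (1 : Equiv.Perm (List X)) ∈ wreath X H) : rootOf h1 = 1 := by
  unfold rootOf; rw [portraitOf_one h1]

theorem locOf_one (h1 : (1 : Equiv.Perm (List X)) ∈ wreath X H) (x : X) : locOf h1 x = 1 := by
  unfold locOf; rw [portraitOf_one h1]; exact toAut_one

theorem portraitOf_heq {g g' : Equiv.Perm (List X)} (e : g = g')
    (hg : g ∈ wreath X H) (hg' : g' ∈ wreath X H) : portraitOf hg = portraitOf hg' := by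
  subst e; rfl

theorem rootOf_heq {g g' : Equiv.Perm (List X)} (e : g = g')
    (hg : g ∈ wreath X H) (hg' : g' ∈ wreath X H) : rootOf hg = rootOf hg' := by
  subst e; rfl

theorem locOf_heq {g g' : Equiv.Perm (List X)} (e : g = g')
    (hg : g ∈ wreath X H) (hg' : g' ∈ wreath X H) : locOf hg = locOf hg' := by
  subst e; rfl

theorem rootOf_inv {g : Equiv.Perm (List X)} (hg : g ∈ wreath X H) (hginv : g⁻¹ ∈ wreath X H) :
    rootOf hginv = (rootOf hg)⁻¹ := by
  have hgh : g * g⁻¹ ∈ wreath X H := mul_mem hg hginv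
  have e1 : rootOf hgh = rootOf hg * rootOf hginv := rootOf_mul hg hginv hgh
  have e2 : rootOf hgh = 1 := by
    rw [rootOf_heq (mul_inv_cancel g) hgh (one_mem _)]
    exact rootOf_one _
  exact (inv_eq_of_mul_eq_one_right (by rw [← e1, e2])).symm

theorem locOf_inv {g : Equiv.Perm (List X)} (hg : g ∈ wreath X H) (hginv : g⁻¹ ∈ wreath X H)
    (x : X) : locOf hginv x = (locOf hg (rootOf hginv x))⁻¹ := by
  have hgh : g * g⁻¹ ∈ wreath X H := mul_mem hg hginv
  have e1 : locOf hgh x = locOf hg (rootOf hginv x) * locOf hginv x :=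
    locOf_mul hg hginv hgh x
  have e2 : locOf hgh x = 1 := by
    rw [locOf_heq (mul_inv_cancel g) hgh (one_mem _)]
    exact locOf_one _ x
  exact (inv_eq_of_mul_eq_one_right (by rw [← e1, e2])).symm

end Basics

section Trunc

open Equiv

variable {X : Type*} {H : Subgroup (Equiv.Perm X)}

/-- Vertices of the tree of depth `< n`. -/
def Vtx (X : Type*) (n : ℕ) := {v : List X // v.length < n}

instance instFiniteVtx [Finite X] (n : ℕ) : Finite (Vtx X n) := by
  haveI := Fintype.ofFinite X
  have hinj : Function.Injective (fun (v : Vtx X n) (i : Fin n) => v.1[(i : ℕ)]?) := by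
    intro v w h
    have hv := v.2
    have hw := w.2
    apply Subtype.ext
    apply List.ext_getElem?
    intro i
    by_cases hi : i < n
    · exact congrFun h ⟨i, hi⟩
    · rw [List.getElem?_eq_none (by omega), List.getElem?_eq_none (by omega)]
  exact Finite.of_injective _ hinj

/-- Extension of a truncated portrait by the identity. -/
def extP (n : ℕ) (φ : Vtx X n → ↥H) : List X → Equiv.Perm X :=
  fun v => if h : v.length < n then ↑(φ ⟨v, h⟩) else 1

theorem extP_mem (n : ℕ) (φ : Vtx X n → ↥H) (v : List X) : extP n φ v ∈ H := by
  unfold extP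
  split
  · exact (φ _).2
  · exact one_mem H

theorem extP_injective (n : ℕ) : Function.Injective (extP (X := X) (H := H) n) := by
  intro φ ψ h
  funext v
  have := congrFun h v.1
  unfold extP at this
  rw [dif_pos v.2, dif_pos v.2] at this
  exact Subtype.ext this

/-- The automorphism associated to a truncated portrait. -/
def autE (n : ℕ) (φ : Vtx X n → ↥H) : Equiv.Perm (List X) := toAut (extP n φ)

theorem autE_mem (n : ℕ) (φ : Vtx X n → ↥H) : autE n φ ∈ wreath X H :=
  toAut_mem_wreath (extP_mem n φ)

/-- The subgroup of elements of the wreath group whose portrait is trivial at depth `≥ n`. -/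
def DW (X : Type*) (H : Subgroup (Equiv.Perm X)) (n : ℕ) : Subgroup (Equiv.Perm (List X)) where
  carrier := {g | g ∈ wreath X H ∧ ∀ (v : List X) (x : X), n ≤ v.length → g (v ++ [x]) = g v ++ [x]}
  one_mem' := ⟨one_mem _, fun _ _ _ => rfl⟩
  mul_mem' := by
    rintro g h ⟨hgW, hgD⟩ ⟨hhW, hhD⟩
    refine ⟨mul_mem hgW hhW, fun v x hv => ?_⟩
    show g (h (v ++ [x])) = g (h v) ++ [x]
    rw [hhD v x hv, hgD (h v) x (by rw [length_apply_of_mem_wreath hhW]; exact hv)]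
  inv_mem' := by
    rintro g ⟨hgW, hgD⟩
    refine ⟨inv_mem hgW, fun v x hv => ?_⟩
    have hw : (g⁻¹ v).length = v.length := length_apply_of_mem_wreath (inv_mem hgW) v
    have : g (g⁻¹ v ++ [x]) = v ++ [x] := by
      rw [hgD (g⁻¹ v) x (by omega), Equiv.Perm.apply_inv_self]
    rw [← this, Equiv.Perm.inv_apply_self]

theorem DW_le_wreath {n : ℕ} : DW X H n ≤ wreath X H := fun _ hg => hg.1

theorem autE_mem_DW (n : ℕ) (φ : Vtx X n → ↥H) : autE n φ ∈ DW X H n := by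
  refine ⟨autE_mem n φ, fun v x hv => ?_⟩
  unfold autE
  rw [toAut_append, extP, dif_neg (by omega)]
  simp

/-- The truncated portrait of an element of the wreath group. -/
noncomputable def truncOf {g : Equiv.Perm (List X)} (hg : g ∈ wreath X H) (n : ℕ) :
    Vtx X n → ↥H := fun v => ⟨portraitOf hg v.1, portraitOf_mem hg v.1⟩

theorem autE_truncOf {n : ℕ} {g : Equiv.Perm (List X)} (hg : g ∈ DW X H n) :
    autE n (truncOf hg.1 n) = g := by
  have hkey : extP n (truncOf hg.1 n) = portraitOf hg.1 := by
    funext v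
    unfold extP truncOf
    split
    · rfl
    · next h =>
      apply Equiv.ext
      intro x
      have h1 := portraitOf_spec hg.1 v x
      have h2 := hg.2 v x (by omega)
      rw [h2] at h1
      simpa using h1
  unfold autE
  rw [hkey, ← eq_toAut hg.1]

/-- Transitivity at level `n` of the subgroup generated by a set. -/
def Trans (n : ℕ) (S : Set (Equiv.Perm (List X))) : Prop :=
  ∀ v w : List X, v.length = n → w.length = n → ∃ g ∈ Subgroup.closure S, g v = w

theorem toAut_eq_of_agree {n : ℕ} {f f' : List X → Equiv.Perm X}
    (hag : ∀ v : List X, v.length < n → f v = f' v) :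
    ∀ v : List X, v.length ≤ n → toAut f v = toAut f' v := by
  intro v
  induction v using List.reverseRecOn with
  | nil => intro _; rfl
  | append_singleton u x ih =>
      intro hl
      rw [List.length_append, List.length_singleton] at hl
      rw [toAut_append, toAut_append, ih (by omega), hag u (by omega)]

theorem trans_congr {ι : Type*} {n : ℕ} {f f' : ι → (List X → Equiv.Perm X)}
    (hfH : ∀ i v, f i v ∈ H) (hf'H : ∀ i v, f' i v ∈ H)
    (hag : ∀ i (v : List X), v.length < n → f i v = f' i v) :
    Trans n (Set.range fun i => toAut (f i)) → Trans n (Set.range fun i => toAut (f' i)) := by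
  intro ht v w hv hw
  have key : ∀ g ∈ Subgroup.closure (Set.range fun i => toAut (f i)),
      ∃ g' ∈ Subgroup.closure (Set.range fun i => toAut (f' i)),
        g ∈ wreath X H ∧ g' ∈ wreath X H ∧ ∀ u : List X, u.length ≤ n → g u = g' u := by
    intro g hg
    induction hg using Subgroup.closure_induction with
    | mem g hgmem =>
        obtain ⟨i, rfl⟩ := hgmem
        exact ⟨toAut (f' i), Subgroup.subset_closure ⟨i, rfl⟩,
          toAut_mem_wreath (hfH i), toAut_mem_wreath (hf'H i),
          toAut_eq_of_agree (hag i)⟩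
    | one => exact ⟨1, one_mem _, one_mem _, one_mem _, fun _ _ => rfl⟩
    | mul a b _ _ iha ihb =>
        obtain ⟨a', ha', haW, ha'W, haag⟩ := iha
        obtain ⟨b', hb', hbW, hb'W, hbag⟩ := ihb
        refine ⟨a' * b', mul_mem ha' hb', mul_mem haW hbW, mul_mem ha'W hb'W, fun u hu => ?_⟩
        show a (b u) = a' (b' u)
        rw [hbag u hu, haag (b' u) (by rw [length_apply_of_mem_wreath hb'W]; exact hu)]
    | inv a _ iha =>
        obtain ⟨a', ha', haW, ha'W, haag⟩ := iha
        refine ⟨a'⁻¹, inv_mem ha', inv_mem haW, inv_mem ha'W, fun u hu => ?_⟩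
        have hlen : (a⁻¹ u).length = u.length := length_apply_of_mem_wreath (inv_mem haW) u
        have h2 : a' (a⁻¹ u) = u := by
          rw [← haag (a⁻¹ u) (by omega), Equiv.Perm.apply_inv_self]
        refine a'.injective ?_
        rw [Equiv.Perm.apply_inv_self, h2]
  obtain ⟨g, hg, hgv⟩ := ht v w hv hw
  obtain ⟨g', hg', _, _, hagree⟩ := key g hg
  exact ⟨g', hg', by rw [← hagree v (by omega), hgv]⟩

theorem closure_insert_one {G : Type*} [Group G] (S : Set G) :
    Subgroup.closure (insert (1 : G) S) = Subgroup.closure S := by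
  apply le_antisymm
  · rw [Subgroup.closure_le]
    intro x hx
    rcases hx with rfl | hx
    · exact one_mem _
    · exact Subgroup.subset_closure hx
  · exact Subgroup.closure_mono (Set.subset_insert _ _)

theorem trans_reindex {ι κ : Type*} {n : ℕ} (e : κ ≃ ι) (f : ι → Equiv.Perm (List X)) :
    Trans n (Set.range f) ↔ Trans n (Set.range (f ∘ e)) := by
  rw [Set.range_comp, Equiv.range_eq_univ, Set.image_univ]

end Trunc

section Schreier

open Equiv Subgroup

variable {X : Type*} {H : Subgroup (Equiv.Perm X)} {ι : Type*} {κ : Type*}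

theorem closure_le_wreath {g : ι → Equiv.Perm (List X)} (hgW : ∀ i, g i ∈ wreath X H) :
    Subgroup.closure (Set.range g) ≤ wreath X H := by
  rw [Subgroup.closure_le]
  rintro _ ⟨i, rfl⟩
  exact hgW i

theorem root_forward {g : ι → Equiv.Perm (List X)} (hgW : ∀ i, g i ∈ wreath X H)
    {w : Equiv.Perm (List X)} (hw : w ∈ Subgroup.closure (Set.range g)) :
    ∃ hwW : w ∈ wreath X H,
      rootOf hwW ∈ Subgroup.closure (Set.range fun i => rootOf (hgW i)) := by
  induction hw using Subgroup.closure_induction with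
  | mem a ha =>
      obtain ⟨i, rfl⟩ := ha
      exact ⟨hgW i, Subgroup.subset_closure ⟨i, rfl⟩⟩
  | one => exact ⟨one_mem _, by rw [rootOf_one (one_mem _)]; exact one_mem _⟩
  | mul a b _ _ iha ihb =>
      obtain ⟨haW, hra⟩ := iha
      obtain ⟨hbW, hrb⟩ := ihb
      exact ⟨mul_mem haW hbW, by rw [rootOf_mul haW hbW (mul_mem haW hbW)]; exact mul_mem hra hrb⟩
  | inv a _ iha =>
      obtain ⟨haW, hra⟩ := iha
      exact ⟨inv_mem haW, by rw [rootOf_inv haW (inv_mem haW)]; exact inv_mem hra⟩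

theorem root_backward {g : ι → Equiv.Perm (List X)} (hgW : ∀ i, g i ∈ wreath X H)
    {τ : Equiv.Perm X} (hτ : τ ∈ Subgroup.closure (Set.range fun i => rootOf (hgW i))) :
    ∃ w ∈ Subgroup.closure (Set.range g), ∃ hwW : w ∈ wreath X H, rootOf hwW = τ := by
  induction hτ using Subgroup.closure_induction with
  | mem a ha =>
      obtain ⟨i, rfl⟩ := ha
      exact ⟨g i, Subgroup.subset_closure ⟨i, rfl⟩, hgW i, rfl⟩
  | one => exact ⟨1, one_mem _, one_mem _, rootOf_one _⟩
  | mul a b _ _ iha ihb =>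
      obtain ⟨wa, hwa, haW, hra⟩ := iha
      obtain ⟨wb, hwb, hbW, hrb⟩ := ihb
      exact ⟨wa * wb, mul_mem hwa hwb, mul_mem haW hbW,
        by rw [rootOf_mul haW hbW (mul_mem haW hbW), hra, hrb]⟩
  | inv a _ iha =>
      obtain ⟨wa, hwa, haW, hra⟩ := iha
      exact ⟨wa⁻¹, inv_mem hwa, inv_mem haW,
        by rw [rootOf_inv haW (inv_mem haW), hra]⟩

theorem loc_forward (x₀ : X) {s : κ → Equiv.Perm (List X)} (hsW : ∀ k, s k ∈ wreath X H)
    (hsR : ∀ k, rootOf (hsW k) x₀ = x₀) {z : Equiv.Perm (List X)}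
    (hz : z ∈ Subgroup.closure (Set.range s)) :
    ∃ hzW : z ∈ wreath X H, rootOf hzW x₀ = x₀ ∧
      locOf hzW x₀ ∈ Subgroup.closure (Set.range fun k => locOf (hsW k) x₀) := by
  induction hz using Subgroup.closure_induction with
  | mem a ha =>
      obtain ⟨k, rfl⟩ := ha
      exact ⟨hsW k, hsR k, Subgroup.subset_closure ⟨k, rfl⟩⟩
  | one =>
      exact ⟨one_mem _, by rw [rootOf_one (one_mem _)]; rfl,
        by rw [locOf_one (one_mem _)]; exact one_mem _⟩
  | mul a b _ _ iha ihb =>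
      obtain ⟨haW, hra, hla⟩ := iha
      obtain ⟨hbW, hrb, hlb⟩ := ihb
      refine ⟨mul_mem haW hbW, ?_, ?_⟩
      · rw [rootOf_mul haW hbW (mul_mem haW hbW)]
        show rootOf haW (rootOf hbW x₀) = x₀
        rw [hrb, hra]
      · rw [locOf_mul haW hbW (mul_mem haW hbW), hrb]
        exact mul_mem hla hlb
  | inv a _ iha =>
      obtain ⟨haW, hra, hla⟩ := iha
      have hr : rootOf (inv_mem haW : a⁻¹ ∈ wreath X H) x₀ = x₀ := by
        rw [rootOf_inv haW (inv_mem haW)]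
        exact (Equiv.Perm.eq_inv_iff_eq.mpr hra).symm
      refine ⟨inv_mem haW, hr, ?_⟩
      rw [locOf_inv haW (inv_mem haW), hr]
      exact inv_mem hla

theorem loc_backward (x₀ : X) {s : κ → Equiv.Perm (List X)} (hsW : ∀ k, s k ∈ wreath X H)
    (hsR : ∀ k, rootOf (hsW k) x₀ = x₀) {ζ : Equiv.Perm (List X)}
    (hζ : ζ ∈ Subgroup.closure (Set.range fun k => locOf (hsW k) x₀)) :
    ∃ z ∈ Subgroup.closure (Set.range s), ∃ hzW : z ∈ wreath X H,
      rootOf hzW x₀ = x₀ ∧ locOf hzW x₀ = ζ := by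
  induction hζ using Subgroup.closure_induction with
  | mem a ha =>
      obtain ⟨k, rfl⟩ := ha
      exact ⟨s k, Subgroup.subset_closure ⟨k, rfl⟩, hsW k, hsR k, rfl⟩
  | one => exact ⟨1, one_mem _, one_mem _, by rw [rootOf_one (one_mem _)]; rfl,
      locOf_one (one_mem _) x₀⟩
  | mul a b _ _ iha ihb =>
      obtain ⟨za, hza, haW, hra, hla⟩ := iha
      obtain ⟨zb, hzb, hbW, hrb, hlb⟩ := ihb
      refine ⟨za * zb, mul_mem hza hzb, mul_mem haW hbW, ?_, ?_⟩
      · rw [rootOf_mul haW hbW (mul_mem haW hbW)]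
        show rootOf haW (rootOf hbW x₀) = x₀
        rw [hrb, hra]
      · rw [locOf_mul haW hbW (mul_mem haW hbW), hrb, hla, hlb]
  | inv a _ iha =>
      obtain ⟨za, hza, haW, hra, hla⟩ := iha
      have hr : rootOf (inv_mem haW : za⁻¹ ∈ wreath X H) x₀ = x₀ := by
        rw [rootOf_inv haW (inv_mem haW)]
        exact (Equiv.Perm.eq_inv_iff_eq.mpr hra).symm
      refine ⟨za⁻¹, inv_mem hza, inv_mem haW, hr, ?_⟩
      rw [locOf_inv haW (inv_mem haW), hr, hla]

/-- The Schreier elements associated to a family of generators and a transversal. -/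
noncomputable def schr (g : ι → Equiv.Perm (List X)) (hgW : ∀ i, g i ∈ wreath X H)
    (T : X → Equiv.Perm (List X)) (k : ι × X) : Equiv.Perm (List X) :=
  (T (rootOf (hgW k.1) k.2))⁻¹ * g k.1 * T k.2

theorem schr_spec {g : ι → Equiv.Perm (List X)} (hgW : ∀ i, g i ∈ wreath X H)
    (T : X → Equiv.Perm (List X)) (k : ι × X) :
    g k.1 * T k.2 = T (rootOf (hgW k.1) k.2) * schr g hgW T k := by
  unfold schr
  group

theorem schr_mem_closure {g : ι → Equiv.Perm (List X)} (hgW : ∀ i, g i ∈ wreath X H)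
    {T : X → Equiv.Perm (List X)} (hTc : ∀ y, T y ∈ Subgroup.closure (Set.range g))
    (k : ι × X) : schr g hgW T k ∈ Subgroup.closure (Set.range g) :=
  mul_mem (mul_mem (inv_mem (hTc _)) (Subgroup.subset_closure ⟨k.1, rfl⟩)) (hTc _)

theorem schr_memW {g : ι → Equiv.Perm (List X)} (hgW : ∀ i, g i ∈ wreath X H)
    {T : X → Equiv.Perm (List X)} (hTW : ∀ y, T y ∈ wreath X H) (k : ι × X) :
    schr g hgW T k ∈ wreath X H :=
  mul_mem (mul_mem (inv_mem (hTW _)) (hgW k.1)) (hTW _)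

theorem schr_root {g : ι → Equiv.Perm (List X)} (hgW : ∀ i, g i ∈ wreath X H) (x₀ : X)
    {T : X → Equiv.Perm (List X)} (hTW : ∀ y, T y ∈ wreath X H)
    (hTroot : ∀ y, rootOf (hTW y) x₀ = y) (k : ι × X) :
    rootOf (schr_memW hgW hTW k) x₀ = x₀ := by
  have h1 : rootOf (schr_memW hgW hTW k) =
      (rootOf (hTW (rootOf (hgW k.1) k.2)))⁻¹ * rootOf (hgW k.1) * rootOf (hTW k.2) := by
    unfold schr
    rw [rootOf_mul (mul_mem (inv_mem (hTW _)) (hgW k.1)) (hTW k.2) (schr_memW hgW hTW k),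
      rootOf_mul (inv_mem (hTW _)) (hgW k.1) (mul_mem (inv_mem (hTW _)) (hgW k.1)),
      rootOf_inv (hTW _) (inv_mem (hTW _))]
  rw [h1]
  show (rootOf (hTW (rootOf (hgW k.1) k.2)))⁻¹
      ((rootOf (hgW k.1)) ((rootOf (hTW k.2)) x₀)) = x₀
  rw [hTroot k.2]
  refine (Equiv.injective (rootOf (hTW (rootOf (hgW k.1) k.2)))) ?_
  rw [Equiv.Perm.apply_inv_self, hTroot]

theorem schreier_main {g : ι → Equiv.Perm (List X)} (hgW : ∀ i, g i ∈ wreath X H)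
    {T : X → Equiv.Perm (List X)} (hTW : ∀ y, T y ∈ wreath X H)
    {w : Equiv.Perm (List X)} (hw : w ∈ Subgroup.closure (Set.range g)) :
    ∃ hwW : w ∈ wreath X H, ∀ y : X,
      ∃ z ∈ Subgroup.closure (Set.range (schr g hgW T)),
        w * T y = T (rootOf hwW y) * z := by
  induction hw using Subgroup.closure_induction with
  | mem a ha =>
      obtain ⟨i, rfl⟩ := ha
      refine ⟨hgW i, fun y => ⟨schr g hgW T (i, y), Subgroup.subset_closure ⟨(i, y), rfl⟩, ?_⟩⟩
      exact schr_spec hgW T (i, y)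
  | one =>
      refine ⟨one_mem _, fun y => ⟨1, one_mem _, ?_⟩⟩
      rw [rootOf_one (one_mem _)]
      simp
  | mul a b _ _ iha ihb =>
      obtain ⟨haW, hfa⟩ := iha
      obtain ⟨hbW, hfb⟩ := ihb
      refine ⟨mul_mem haW hbW, fun y => ?_⟩
      obtain ⟨zb, hzb, heb⟩ := hfb y
      obtain ⟨za, hza, hea⟩ := hfa (rootOf hbW y)
      refine ⟨za * zb, mul_mem hza hzb, ?_⟩
      rw [rootOf_mul haW hbW (mul_mem haW hbW)]
      show a * b * T y = T (rootOf haW (rootOf hbW y)) * (za * zb)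
      rw [mul_assoc, heb, ← mul_assoc, hea, mul_assoc]
  | inv a _ iha =>
      obtain ⟨haW, hfa⟩ := iha
      refine ⟨inv_mem haW, fun y => ?_⟩
      set y' := rootOf (inv_mem haW : a⁻¹ ∈ wreath X H) y with hy'
      obtain ⟨z, hz, he⟩ := hfa y'
      have hration : rootOf haW y' = y := by
        rw [hy', rootOf_inv haW (inv_mem haW)]
        exact Equiv.Perm.apply_inv_self _ _
      rw [hration] at he
      refine ⟨z⁻¹, inv_mem hz, ?_⟩
      have h2 : T y = a * T y' * z⁻¹ := by rw [he]; group
      rw [h2]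
      group

theorem stab_mem_schr {g : ι → Equiv.Perm (List X)} (hgW : ∀ i, g i ∈ wreath X H) (x₀ : X)
    {T : X → Equiv.Perm (List X)} (hTW : ∀ y, T y ∈ wreath X H) (hTbase : T x₀ = 1)
    {w : Equiv.Perm (List X)} (hw : w ∈ Subgroup.closure (Set.range g))
    (hwW : w ∈ wreath X H) (hst : rootOf hwW x₀ = x₀) :
    w ∈ Subgroup.closure (Set.range (schr g hgW T)) := by
  obtain ⟨hwW', hf⟩ := schreier_main hgW hTW hw
  obtain ⟨z, hz, he⟩ := hf x₀
  have hst' : rootOf hwW' x₀ = x₀ := hst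
  rw [hst', hTbase, mul_one, one_mul] at he
  rw [he]
  exact hz

end Schreier

section TransRec

open Equiv Subgroup

variable {X : Type*} {H : Subgroup (Equiv.Perm X)} {ι : Type*}

theorem trans_root {g : ι → Equiv.Perm (List X)} (hgW : ∀ i, g i ∈ wreath X H) {n : ℕ}
    (ht : Trans (n + 1) (Set.range g)) (x y : X) :
    ∃ τ ∈ Subgroup.closure (Set.range fun i => rootOf (hgW i)), τ x = y := by
  obtain ⟨w, hw, hwv⟩ := ht (x :: List.replicate n x) (y :: List.replicate n x)
    (by simp) (by simp)
  have hwW := closure_le_wreath hgW hw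
  rw [apply_cons hwW] at hwv
  obtain ⟨h1, -⟩ := List.cons_eq_cons.mp hwv
  obtain ⟨hwW', hmem⟩ := root_forward hgW hw
  exact ⟨rootOf hwW', hmem, h1⟩

theorem trans_succ_to_loc {g : ι → Equiv.Perm (List X)} (hgW : ∀ i, g i ∈ wreath X H) (x₀ : X)
    {T : X → Equiv.Perm (List X)} (hTW : ∀ y, T y ∈ wreath X H)
    (hTroot : ∀ y, rootOf (hTW y) x₀ = y) (hTbase : T x₀ = 1) {n : ℕ}
    (ht : Trans (n + 1) (Set.range g)) :
    Trans n (Set.range fun k : ι × X => locOf (schr_memW hgW hTW k) x₀) := by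
  intro v w hv hw
  obtain ⟨gg, hgg, he⟩ := ht (x₀ :: v) (x₀ :: w) (by simp [hv]) (by simp [hw])
  have hggW := closure_le_wreath hgW hgg
  rw [apply_cons hggW] at he
  obtain ⟨h1, h2⟩ := List.cons_eq_cons.mp he
  have hmem := stab_mem_schr hgW x₀ hTW hTbase hgg hggW h1
  obtain ⟨hzW, hroot, hloc⟩ :=
    loc_forward x₀ (schr_memW hgW hTW) (schr_root hgW x₀ hTW hTroot) hmem
  exact ⟨locOf hzW x₀, hloc, h2⟩

theorem trans_succ_of_loc {g : ι → Equiv.Perm (List X)} (hgW : ∀ i, g i ∈ wreath X H) (x₀ : X)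
    {T : X → Equiv.Perm (List X)} (hTc : ∀ y, T y ∈ Subgroup.closure (Set.range g))
    (hTW : ∀ y, T y ∈ wreath X H) (hTroot : ∀ y, rootOf (hTW y) x₀ = y) {n : ℕ}
    (hloc : Trans n (Set.range fun k : ι × X => locOf (schr_memW hgW hTW k) x₀)) :
    Trans (n + 1) (Set.range g) := by
  intro v w hv hw
  cases v with
  | nil => simp at hv
  | cons a v' =>
    cases w with
    | nil => simp at hw
    | cons b w' =>
      have hv' : v'.length = n := by simpa using hv
      have hw' : w'.length = n := by simpa using hw
      have hAW := hTW a
      have hAinv : (T a)⁻¹ ∈ wreath X H := inv_mem hAW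
      have hra : rootOf hAinv a = x₀ := by
        rw [rootOf_inv hAW hAinv]
        refine (Equiv.injective (rootOf hAW)) ?_
        rw [Equiv.Perm.apply_inv_self, hTroot a]
      have hBW := hTW b
      have hlocB : locOf hBW x₀ ∈ wreath X H := locOf_mem hBW x₀
      have hv2 : (locOf hAinv a v').length = n := by
        rw [length_apply_of_mem_wreath (locOf_mem hAinv a)]; exact hv'
      have hw2 : ((locOf hBW x₀)⁻¹ w').length = n := by
        rw [length_apply_of_mem_wreath (inv_mem hlocB)]; exact hw'
      obtain ⟨ζ, hζ, hζe⟩ := hloc (locOf hAinv a v') ((locOf hBW x₀)⁻¹ w') hv2 hw2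
      obtain ⟨z, hzc, hzW, hzr, hzl⟩ :=
        loc_backward x₀ (schr_memW hgW hTW) (schr_root hgW x₀ hTW hTroot) hζ
      have hzc' : z ∈ Subgroup.closure (Set.range g) := by
        have hle : Subgroup.closure (Set.range (schr g hgW T)) ≤
            Subgroup.closure (Set.range g) := by
          rw [Subgroup.closure_le]
          rintro _ ⟨k, rfl⟩
          exact schr_mem_closure hgW hTc k
        exact hle hzc
      refine ⟨T b * z * (T a)⁻¹, mul_mem (mul_mem (hTc b) hzc') (inv_mem (hTc a)), ?_⟩
      show T b (z ((T a)⁻¹ (a :: v'))) = b :: w'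
      rw [apply_cons hAinv, hra, apply_cons hzW, hzr, hzl, hζe, apply_cons hBW, hTroot b,
        Equiv.Perm.apply_inv_self]

end TransRec

section Tree

open Equiv Subgroup

open Classical in
/-- Word built along a spanning tree: `buildT y = gen y * buildT (par y)`, `buildT x₀ = 1`. -/
noncomputable def buildT {G X : Type*} [Group G] (x₀ : X) (gen : X → G) (par : X → X)
    (δ : X → ℕ) (hδ : ∀ y, y ≠ x₀ → δ (par y) < δ y) (y : X) : G :=
  if h : y = x₀ then 1 else gen y * buildT x₀ gen par δ hδ (par y)
termination_by δ y
decreasing_by exact hδ y h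

theorem buildT_base {G X : Type*} [Group G] (x₀ : X) (gen : X → G) (par : X → X)
    (δ : X → ℕ) (hδ : ∀ y, y ≠ x₀ → δ (par y) < δ y) :
    buildT x₀ gen par δ hδ x₀ = 1 := by
  rw [buildT]
  rw [dif_pos rfl]

theorem buildT_step {G X : Type*} [Group G] (x₀ : X) (gen : X → G) (par : X → X)
    (δ : X → ℕ) (hδ : ∀ y, y ≠ x₀ → δ (par y) < δ y) {y : X} (h : y ≠ x₀) :
    buildT x₀ gen par δ hδ y = gen y * buildT x₀ gen par δ hδ (par y) := by
  conv_lhs => rw [buildT]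
  rw [dif_neg h]

theorem buildT_induction {G X : Type*} [Group G] {x₀ : X} {gen : X → G} {par : X → X}
    {δ : X → ℕ} {hδ : ∀ y, y ≠ x₀ → δ (par y) < δ y} {P : X → G → Prop}
    (hbase : P x₀ 1)
    (hstep : ∀ y, y ≠ x₀ → P (par y) (buildT x₀ gen par δ hδ (par y)) →
      P y (gen y * buildT x₀ gen par δ hδ (par y))) :
    ∀ y, P y (buildT x₀ gen par δ hδ y) := by
  have key : ∀ k y, δ y ≤ k → P y (buildT x₀ gen par δ hδ y) := by
    intro k
    induction k with
    | zero =>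
        intro y hy
        by_cases h : y = x₀
        · subst h; rw [buildT_base]; exact hbase
        · exact absurd (hδ y h) (by omega)
    | succ k ih =>
        intro y hy
        by_cases h : y = x₀
        · subst h; rw [buildT_base]; exact hbase
        · rw [buildT_step _ _ _ _ _ h]
          exact hstep y h (ih (par y) (by have := hδ y h; omega))
  exact fun y => key (δ y) y le_rfl

theorem buildT_congr {G X : Type*} [Group G] {x₀ : X} {gen gen' : X → G} {par : X → X}
    {δ : X → ℕ} {hδ : ∀ y, y ≠ x₀ → δ (par y) < δ y}
    (hag : ∀ y, y ≠ x₀ → gen y = gen' y) :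
    buildT x₀ gen par δ hδ = buildT x₀ gen' par δ hδ := by
  funext y
  exact buildT_induction (gen := gen') (par := par) (δ := δ) (hδ := hδ)
    (P := fun z t => buildT x₀ gen par δ hδ z = t)
    (buildT_base _ _ _ _ _)
    (fun y hy ih => by
      have ih' : buildT x₀ gen par δ hδ (par y) = buildT x₀ gen' par δ hδ (par y) := ih
      show buildT x₀ gen par δ hδ y = gen' y * buildT x₀ gen' par δ hδ (par y)
      rw [buildT_step _ _ _ _ _ hy, ih', hag y hy]) y

/-- Existence of a spanning tree of forward edges in the Schreier graph. -/
theorem exists_tree {X : Type*} [Finite X] {ι : Type*} [Nonempty ι] [Nonempty X] (x₀ : X)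
    (ρ : ι → Equiv.Perm X)
    (hRT : ∀ y : X, ∃ τ ∈ Subgroup.closure (Set.range ρ), τ x₀ = y) :
    ∃ (δ : X → ℕ) (pr : X → ι × X),
      ∀ y, y ≠ x₀ → ρ (pr y).1 (pr y).2 = y ∧ δ (pr y).2 < δ y := by
  classical
  let S : ℕ → Set X := fun k => Nat.rec {x₀} (fun _ Sk => Sk ∪ ⋃ i, ρ i '' Sk) k
  have hS0 : S 0 = {x₀} := rfl
  have hSsucc : ∀ k, S (k + 1) = S k ∪ ⋃ i, ρ i '' S k := fun _ => rfl
  set U : Set X := ⋃ k, S k with hU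
  have hfwd : ∀ (i : ι) (y), y ∈ U → ρ i y ∈ U := by
    intro i y hy
    obtain ⟨k, hk⟩ := Set.mem_iUnion.mp hy
    apply Set.mem_iUnion.mpr ⟨k + 1, ?_⟩
    rw [hSsucc k]
    exact Or.inr (Set.mem_iUnion.mpr ⟨i, ⟨y, hk, rfl⟩⟩)
  have himg : ∀ i : ι, ρ i '' U = U := by
    intro i
    apply Set.eq_of_subset_of_ncard_le
    · rintro _ ⟨y, hy, rfl⟩; exact hfwd i y hy
    · rw [Set.ncard_image_of_injective _ (Equiv.injective (ρ i))]
    · exact Set.toFinite U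
  have hbwd : ∀ (i : ι) (y), y ∈ U → (ρ i)⁻¹ y ∈ U := by
    intro i y hy
    rw [← himg i] at hy
    obtain ⟨a, ha, rfl⟩ := hy
    rwa [Equiv.Perm.inv_apply_self]
  have hcl : ∀ τ ∈ Subgroup.closure (Set.range ρ), ∀ y ∈ U, τ y ∈ U ∧ τ⁻¹ y ∈ U := by
    intro τ hτ
    induction hτ using Subgroup.closure_induction with
    | mem a ha =>
        obtain ⟨i, rfl⟩ := ha
        exact fun y hy => ⟨hfwd i y hy, hbwd i y hy⟩
    | one => simpa using fun y hy => ⟨hy, hy⟩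
    | mul a b _ _ iha ihb =>
        intro y hy
        constructor
        · exact (iha _ (ihb y hy).1).1
        · show (b⁻¹ * a⁻¹) y ∈ U
          exact (ihb _ (iha y hy).2).2
    | inv a _ iha =>
        intro y hy
        exact ⟨(iha y hy).2, by simpa using (iha y hy).1⟩
  have hUuniv : ∀ y : X, ∃ k, y ∈ S k := by
    intro y
    obtain ⟨τ, hτ, he⟩ := hRT y
    have hx0 : x₀ ∈ U := Set.mem_iUnion.mpr ⟨0, rfl⟩
    have := (hcl τ hτ x₀ hx0).1
    rw [he] at this
    exact Set.mem_iUnion.mp this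
  let δ : X → ℕ := fun y => sInf {k | y ∈ S k}
  have hδmem : ∀ y, y ∈ S (δ y) := fun y => Nat.sInf_mem (hUuniv y)
  have hspec : ∀ y, y ≠ x₀ → ∃ k : ι × X, ρ k.1 k.2 = y ∧ δ k.2 < δ y := by
    intro y hy
    have hy0 : δ y ≠ 0 := by
      intro h0
      have hsp := hδmem y
      rw [h0] at hsp
      exact hy hsp
    obtain ⟨m, hm⟩ : ∃ m, δ y = m + 1 := ⟨δ y - 1, by omega⟩
    have hin : y ∈ S (m + 1) := by rw [← hm]; exact hδmem y
    have hlt : m < δ y := by omega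
    have hnot : y ∉ S m := Nat.notMem_of_lt_sInf hlt
    rw [hSsucc m] at hin
    rcases hin with hin | hin
    · exact absurd hin hnot
    · rw [Set.mem_iUnion] at hin
      obtain ⟨i, hi⟩ := hin
      obtain ⟨a, ha, hρ⟩ := hi
      refine ⟨(i, a), hρ, ?_⟩
      have hle : δ a ≤ m := Nat.sInf_le ha
      show δ a < δ y
      omega
  exact ⟨δ, fun y => if h : y = x₀ then Classical.arbitrary _ else (hspec y h).choose,
    fun y hy => by simpa [dif_neg hy] using (hspec y hy).choose_spec⟩

end Tree

section Combine

open Equiv Subgroup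

variable {X : Type*} {H : Subgroup (Equiv.Perm X)}

theorem autE_injective (n : ℕ) : Function.Injective (autE (X := X) (H := H) n) :=
  fun _ _ e => extP_injective n (toAut_injective e)

theorem portrait_trivial_of_DW {N : ℕ} {g : Equiv.Perm (List X)} (hg : g ∈ DW X H N)
    {u : List X} (hu : N ≤ u.length) : portraitOf hg.1 u = 1 := by
  apply Equiv.ext
  intro z
  have h1 := portraitOf_spec hg.1 u z
  have h2 := hg.2 u z hu
  rw [h2] at h1
  simpa using h1.symm

theorem locOf_mem_DW {n : ℕ} {g : Equiv.Perm (List X)} (hg : g ∈ DW X H (n + 1)) (x : X) :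
    locOf hg.1 x ∈ DW X H n := by
  refine ⟨locOf_mem hg.1 x, fun v z hv => ?_⟩
  show toAut _ (v ++ [z]) = toAut _ v ++ [z]
  rw [toAut_append, portrait_trivial_of_DW hg (by simp; omega)]
  simp

/-- Recombining a root layer and a family of subtree layers into a depth-`n+1` layer. -/
def combine {X : Type*} {H : Subgroup (Equiv.Perm X)} (n j : ℕ) (σ : Fin j → ↥H)
    (h : Fin j × X → Vtx X n → ↥H) : Fin j → Vtx X (n + 1) → ↥H := fun i v =>
  match v with
  | ⟨[], _⟩ => σ i
  | ⟨x :: u, hu⟩ => h (i, x) ⟨u, by simpa using hu⟩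

/-- The decomposition of depth-`n+1` data into the root layer and the subtree layers. -/
def combineEquiv (n j : ℕ) :
    ((Fin j → ↥H) × (Fin j × X → Vtx X n → ↥H)) ≃ (Fin j → Vtx X (n + 1) → ↥H) where
  toFun p := combine n j p.1 p.2
  invFun φ := (fun i => φ i ⟨[], by simp⟩, fun k u => φ k.1 ⟨k.2 :: u.1, by simpa using u.2⟩)
  left_inv p := by
    apply Prod.ext
    · rfl
    · rfl
  right_inv φ := by
    funext i v
    obtain ⟨l, hl⟩ := v
    cases l with
    | nil => rfl
    | cons x u => rfl

theorem combine_root {n j : ℕ} (σ : Fin j → ↥H) (h : Fin j × X → Vtx X n → ↥H) (i : Fin j) :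
    rootOf (autE_mem (n + 1) (combine n j σ h i)) = (↑(σ i) : Equiv.Perm X) := by
  show portraitOf (autE_mem (n + 1) (combine n j σ h i)) [] = _
  unfold autE
  rw [portraitOf_toAut (f := extP (n + 1) (combine n j σ h i)) (autE_mem (n + 1) (combine n j σ h i))]
  unfold extP
  rw [dif_pos (by simp)]
  rfl

theorem combine_loc {n j : ℕ} (σ : Fin j → ↥H) (h : Fin j × X → Vtx X n → ↥H) (i : Fin j)
    (x : X) : locOf (autE_mem (n + 1) (combine n j σ h i)) x = autE n (h (i, x)) := by
  unfold locOf autE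
  congr 1
  funext v
  rw [portraitOf_toAut (f := extP (n + 1) (combine n j σ h i)) (autE_mem (n + 1) (combine n j σ h i))]
  unfold extP
  by_cases hl : v.length < n
  · rw [dif_pos (by simp; omega), dif_pos hl]
    rfl
  · rw [dif_neg (by simp; omega), dif_neg hl]

theorem sloc_formula {ι : Type*} {g : ι → Equiv.Perm (List X)} (hgW : ∀ i, g i ∈ wreath X H)
    (x₀ : X) {T : X → Equiv.Perm (List X)} (hTW : ∀ y, T y ∈ wreath X H)
    (hTroot : ∀ y, rootOf (hTW y) x₀ = y) (k : ι × X) :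
    locOf (schr_memW hgW hTW k) x₀ =
      (locOf (hTW (rootOf (hgW k.1) k.2)) x₀)⁻¹ * locOf (hgW k.1) k.2 * locOf (hTW k.2) x₀ := by
  set c := rootOf (hgW k.1) k.2 with hc
  have hAinv : (T c)⁻¹ ∈ wreath X H := inv_mem (hTW c)
  have h1 : (T c)⁻¹ * g k.1 ∈ wreath X H := mul_mem hAinv (hgW k.1)
  have e1 : locOf (schr_memW hgW hTW k) x₀ =
      locOf h1 (rootOf (hTW k.2) x₀) * locOf (hTW k.2) x₀ := by
    have := locOf_mul h1 (hTW k.2) (schr_memW hgW hTW k) x₀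
    exact this
  rw [e1, hTroot k.2]
  congr 1
  have e2 : locOf h1 k.2 = locOf hAinv (rootOf (hgW k.1) k.2) * locOf (hgW k.1) k.2 :=
    locOf_mul hAinv (hgW k.1) h1 k.2
  rw [e2, ← hc]
  congr 1
  have hrinv : rootOf hAinv c = x₀ := by
    rw [rootOf_inv (hTW c) hAinv]
    refine (Equiv.injective (rootOf (hTW c))) ?_
    rw [Equiv.Perm.apply_inv_self, hTroot c]
  rw [locOf_inv (hTW c) hAinv, hrinv]

theorem schr_mem_DW {N : ℕ} {ι : Type*} {g : ι → Equiv.Perm (List X)}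
    (hgW : ∀ i, g i ∈ wreath X H) {T : X → Equiv.Perm (List X)} (hTW : ∀ y, T y ∈ wreath X H)
    (hgD : ∀ i, g i ∈ DW X H N) (hTD : ∀ y, T y ∈ DW X H N) (k : ι × X) :
    schr g hgW T k ∈ DW X H N :=
  mul_mem (mul_mem (inv_mem (hTD _)) (hgD k.1)) (hTD k.2)

theorem trans_congr_closure {n : ℕ} {S S' : Set (Equiv.Perm (List X))}
    (h : Subgroup.closure S = Subgroup.closure S') : Trans n S ↔ Trans n S' := by
  unfold Trans
  rw [h]

end Combine

section KeyCount

open Equiv Subgroup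

variable {X : Type*} {H : Subgroup (Equiv.Perm X)}

theorem trans_zero (S : Set (Equiv.Perm (List X))) : Trans 0 S := by
  intro v w hv hw
  rw [List.length_eq_zero_iff] at hv hw
  subst hv; subst hw
  exact ⟨1, one_mem _, rfl⟩

instance instIsEmptyVtx0 : IsEmpty (Vtx X 0) := ⟨fun v => by have := v.2; omega⟩

/-- Splitting of depth `n+1` vertices. -/
def vtxSuccEquiv (X : Type*) (n : ℕ) : Vtx X (n + 1) ≃ Option (X × Vtx X n) where
  toFun v := match v with
    | ⟨[], _⟩ => none
    | ⟨x :: u, hu⟩ => some (x, ⟨u, by simpa using hu⟩)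
  invFun o := match o with
    | none => ⟨[], by simp⟩
    | some (x, u) => ⟨x :: u.1, by simpa using u.2⟩
  left_inv v := by obtain ⟨l, hl⟩ := v; cases l <;> rfl
  right_inv o := by rcases o with _ | ⟨x, u⟩ <;> rfl

theorem card_vtx_succ (X : Type*) [Finite X] (n : ℕ) :
    Nat.card (Vtx X (n + 1)) = 1 + Nat.card X * Nat.card (Vtx X n) := by
  haveI := Fintype.ofFinite X
  rw [Nat.card_congr (vtxSuccEquiv X n)]
  have h1 : Nat.card (Option (X × Vtx X n)) = Nat.card (X × Vtx X n) + 1 := by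
    haveI : Fintype (X × Vtx X n) := Fintype.ofFinite _
    rw [Nat.card_eq_fintype_card, Nat.card_eq_fintype_card, Fintype.card_option]
  rw [h1, Nat.card_prod]
  ring

theorem card_split {α V : Type*} [Finite α] [Finite V] [Nonempty V] (s : Set α)
    (P : ({k : α // k ∉ s} → V) → Prop) :
    Nat.card {f : α → V // P (fun k => f k.1)} =
      Nat.card {hk : {k : α // k ∉ s} → V // P hk} * Nat.card ({k : α // k ∈ s} → V) := by
  classical
  rw [← Nat.card_prod]
  apply Nat.card_congr
  refine ⟨fun f => (⟨fun k => f.1 k.1, f.2⟩, fun k => f.1 k.1),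
    fun p => ⟨fun k => if hk : k ∈ s then p.2 ⟨k, hk⟩ else p.1.1 ⟨k, hk⟩, ?_⟩, ?_, ?_⟩
  · have he : (fun k : {k : α // k ∉ s} =>
        (fun k' => if hk : k' ∈ s then p.2 ⟨k', hk⟩ else p.1.1 ⟨k', hk⟩) k.1) = p.1.1 := by
      funext k
      exact dif_neg k.2
    rw [he]
    exact p.1.2
  · intro f
    apply Subtype.ext
    funext k
    by_cases hk : k ∈ s
    · exact dif_pos hk
    · exact dif_neg hk
  · intro p
    apply Prod.ext
    · apply Subtype.ext
      funext k
      exact dif_neg k.2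
    · funext k
      exact dif_pos k.2

variable {n j : ℕ} (σ : Fin j → ↥H) (x₀ : X) (δ : X → ℕ) (pr : X → Fin j × X)
  (hδ : ∀ y, y ≠ x₀ → δ (pr y).2 < δ y)

/-- The transversal words. -/
noncomputable def TT (h : Fin j × X → Vtx X n → ↥H) : X → Equiv.Perm (List X) :=
  buildT x₀ (fun y => autE (n + 1) (combine n j σ h (pr y).1)) (fun y => (pr y).2) δ hδ

/-- The loc-components at `x₀` of the transversal words. -/
noncomputable def LL (h : Fin j × X → Vtx X n → ↥H) : X → Equiv.Perm (List X) :=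
  buildT x₀ (fun y => autE n (h (pr y))) (fun y => (pr y).2) δ hδ

theorem TT_facts (htree : ∀ y, y ≠ x₀ → (↑(σ (pr y).1) : Equiv.Perm X) (pr y).2 = y)
    (h : Fin j × X → Vtx X n → ↥H) (y : X) :
    TT σ x₀ δ pr hδ h y ∈
        Subgroup.closure (Set.range fun i => autE (n + 1) (combine n j σ h i)) ∧
      TT σ x₀ δ pr hδ h y ∈ DW X H (n + 1) ∧
      ∃ hW : TT σ x₀ δ pr hδ h y ∈ wreath X H,
        rootOf hW x₀ = y ∧ locOf hW x₀ = LL x₀ δ pr hδ h y := by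
  unfold TT
  refine buildT_induction
    (P := fun y t =>
      t ∈ Subgroup.closure (Set.range fun i => autE (n + 1) (combine n j σ h i)) ∧
      t ∈ DW X H (n + 1) ∧
      ∃ hW : t ∈ wreath X H, rootOf hW x₀ = y ∧ locOf hW x₀ = LL x₀ δ pr hδ h y)
    ?_ ?_ y
  · refine ⟨one_mem _, one_mem _, one_mem _, ?_, ?_⟩
    · rw [rootOf_one (one_mem _)]
      simp
    · rw [locOf_one (one_mem _)]
      unfold LL
      rw [buildT_base]
  · rintro y hy ⟨ihc, ihD, hW, ihr, ihl⟩
    have hgW : autE (n + 1) (combine n j σ h (pr y).1) ∈ wreath X H := autE_mem _ _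
    have hW' : autE (n + 1) (combine n j σ h (pr y).1) *
        buildT x₀ (fun y => autE (n + 1) (combine n j σ h (pr y).1)) (fun y => (pr y).2) δ hδ
          (pr y).2 ∈ wreath X H := mul_mem hgW hW
    refine ⟨mul_mem (Subgroup.subset_closure ⟨(pr y).1, rfl⟩) ihc,
      mul_mem (autE_mem_DW _ _) ihD, hW', ?_, ?_⟩
    · have e1 := rootOf_mul hgW hW hW'
      have e2 : rootOf hW' x₀ = rootOf hgW (rootOf hW x₀) := by rw [e1]; rfl
      rw [e2, ihr, combine_root]
      exact htree y hy
    · have e1 := locOf_mul hgW hW hW' x₀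
      rw [e1, ihr, ihl, combine_loc]
      have e2 : LL x₀ δ pr hδ h y =
          autE n (h (pr y)) * LL x₀ δ pr hδ h (pr y).2 := by
        unfold LL
        exact buildT_step _ _ _ _ _ hy
      rw [e2]

end KeyCount

section KeyCount2

open Equiv Subgroup

variable {X : Type*} {H : Subgroup (Equiv.Perm X)}

theorem key_count [Finite X] {n j : ℕ} (σ : Fin j → ↥H) (x₀ : X) (δ : X → ℕ)
    (pr : X → Fin j × X) (hδ : ∀ y, y ≠ x₀ → δ (pr y).2 < δ y)
    (htree : ∀ y, y ≠ x₀ → (↑(σ (pr y).1) : Equiv.Perm X) (pr y).2 = y) :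
    Nat.card {h : Fin j × X → Vtx X n → ↥H //
        Trans (n + 1) (Set.range fun i => autE (n + 1) (combine n j σ h i))} =
      Nat.card {ψ : Fin (Nat.card {k : Fin j × X // k ∉ pr '' {y | y ≠ x₀}}) → Vtx X n → ↥H //
          Trans n (Set.range fun t => autE n (ψ t))} *
        Nat.card ({k : Fin j × X // k ∈ pr '' {y | y ≠ x₀}} → (Vtx X n → ↥H)) := by
  classical
  haveI := Fintype.ofFinite X
  set Tr : Set (Fin j × X) := pr '' {y | y ≠ x₀} with hTrdef
  have hgW : ∀ (h : Fin j × X → Vtx X n → ↥H) i,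
      autE (n + 1) (combine n j σ h i) ∈ wreath X H := fun h i => autE_mem _ _
  have hgD : ∀ (h : Fin j × X → Vtx X n → ↥H) i,
      autE (n + 1) (combine n j σ h i) ∈ DW X H (n + 1) := fun h i => autE_mem_DW _ _
  have hTfacts := TT_facts (n := n) σ x₀ δ pr hδ htree
  have hTc : ∀ h y, TT σ x₀ δ pr hδ h y ∈
      Subgroup.closure (Set.range fun i => autE (n + 1) (combine n j σ h i)) :=
    fun h y => (hTfacts h y).1
  have hTD : ∀ h y, TT σ x₀ δ pr hδ h y ∈ DW X H (n + 1) := fun h y => (hTfacts h y).2.1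
  have hTW : ∀ h y, TT σ x₀ δ pr hδ h y ∈ wreath X H := fun h y => (hTD h y).1
  have hTroot : ∀ h y, rootOf (hTW h y) x₀ = y := by
    intro h y
    obtain ⟨hW, hr, -⟩ := (hTfacts h y).2.2
    exact hr
  have hTloc : ∀ h y, locOf (hTW h y) x₀ = LL x₀ δ pr hδ h y := by
    intro h y
    obtain ⟨hW, -, hl⟩ := (hTfacts h y).2.2
    exact hl
  have hTbase : ∀ h : Fin j × X → Vtx X n → ↥H, TT σ x₀ δ pr hδ h x₀ = 1 := fun h => buildT_base _ _ _ _ _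
  let Sl : (Fin j × X → Vtx X n → ↥H) → Fin j × X → Equiv.Perm (List X) :=
    fun h k => locOf (schr_memW (hgW h) (hTW h) k) x₀
  have hSlD : ∀ h k, Sl h k ∈ DW X H n :=
    fun h k => locOf_mem_DW (schr_mem_DW (hgW h) (hTW h) (hgD h) (fun y => hTD h y) k) x₀
  have hroot_gen : ∀ (h : Fin j × X → Vtx X n → ↥H) (i : Fin j),
      rootOf (hgW h i) = (↑(σ i) : Equiv.Perm X) := fun h i => combine_root σ h i
  have hloc_gen : ∀ (h : Fin j × X → Vtx X n → ↥H) (k : Fin j × X),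
      locOf (hgW h k.1) k.2 = autE n (h k) := fun h k => combine_loc σ h k.1 k.2
  have hSl_eq : ∀ h k, Sl h k =
      (LL x₀ δ pr hδ h ((↑(σ k.1) : Equiv.Perm X) k.2))⁻¹ * autE n (h k) *
        LL x₀ δ pr hδ h k.2 := by
    intro h k
    show locOf (schr_memW (hgW h) (hTW h) k) x₀ = _
    rw [sloc_formula (hgW h) x₀ (hTW h) (hTroot h) k, hTloc h, hTloc h, hloc_gen h k,
      hroot_gen h k.1]
  have hSl_tree : ∀ h k, k ∈ Tr → Sl h k = 1 := by
    intro h k hk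
    obtain ⟨y, hy, rfl⟩ := hk
    have hTy : TT σ x₀ δ pr hδ h y =
        autE (n + 1) (combine n j σ h (pr y).1) * TT σ x₀ δ pr hδ h (pr y).2 := by
      unfold TT
      exact buildT_step _ _ _ _ _ hy
    have hrootk : rootOf (hgW h (pr y).1) (pr y).2 = y := by
      rw [hroot_gen h]
      exact htree y hy
    have hschr : schr (fun i => autE (n + 1) (combine n j σ h i)) (hgW h)
        (TT σ x₀ δ pr hδ h) (pr y) = 1 := by
      show (TT σ x₀ δ pr hδ h (rootOf (hgW h (pr y).1) (pr y).2))⁻¹ *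
          autE (n + 1) (combine n j σ h (pr y).1) * TT σ x₀ δ pr hδ h (pr y).2 = 1
      rw [hrootk, hTy]
      group
    show locOf (schr_memW (hgW h) (hTW h) (pr y)) x₀ = 1
    have e := locOf_heq hschr (schr_memW (hgW h) (hTW h) (pr y)) (one_mem _)
    rw [e]
    exact locOf_one (one_mem _) x₀
  let Θ : (Fin j × X → Vtx X n → ↥H) → (Fin j × X → Vtx X n → ↥H) :=
    fun h k => if k ∈ Tr then h k else truncOf (locOf_mem (schr_memW (hgW h) (hTW h) k) x₀) n
  have hΘ_tree : ∀ h k, k ∈ Tr → Θ h k = h k := fun h k hk => if_pos hk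
  have hΘ_val : ∀ h k, k ∉ Tr → autE n (Θ h k) = Sl h k := by
    intro h k hk
    have e : Θ h k = truncOf (locOf_mem (schr_memW (hgW h) (hTW h) k) x₀) n := if_neg hk
    rw [e]
    exact autE_truncOf (hSlD h k)
  have hΘ_inj : Function.Injective Θ := by
    intro h h' he
    have htreq : ∀ k, k ∈ Tr → h k = h' k := by
      intro k hk
      have e := congrFun he k
      rw [hΘ_tree h k hk, hΘ_tree h' k hk] at e
      exact e
    have hLb : LL x₀ δ pr hδ h = LL x₀ δ pr hδ h' := by
      unfold LL
      apply buildT_congr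
      intro y hy
      rw [htreq (pr y) ⟨y, hy, rfl⟩]
    funext k
    by_cases hk : k ∈ Tr
    · exact htreq k hk
    · have h1 : Sl h k = Sl h' k := by
        rw [← hΘ_val h k hk, ← hΘ_val h' k hk, he]
      rw [hSl_eq h k, hSl_eq h' k, hLb] at h1
      have h2 := mul_left_cancel (mul_right_cancel h1)
      exact autE_injective n h2
  have hΘ_bij : Function.Bijective Θ := Finite.injective_iff_bijective.mp hΘ_inj
  have hEv_iff : ∀ h, Trans (n + 1) (Set.range fun i => autE (n + 1) (combine n j σ h i)) ↔
      Trans n (Set.range fun k : {k : Fin j × X // k ∉ Tr} => autE n (Θ h k.1)) := by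
    intro h
    have hcl : Subgroup.closure (Set.range fun k : Fin j × X => Sl h k) =
        Subgroup.closure (Set.range fun k : {k : Fin j × X // k ∉ Tr} => autE n (Θ h k.1)) := by
      apply le_antisymm
      · rw [Subgroup.closure_le]
        rintro _ ⟨k, rfl⟩
        by_cases hk : k ∈ Tr
        · show Sl h k ∈ _
          rw [hSl_tree h k hk]
          exact one_mem _
        · show Sl h k ∈ _
          rw [← hΘ_val h k hk]
          exact Subgroup.subset_closure ⟨⟨k, hk⟩, rfl⟩
      · rw [Subgroup.closure_le]
        rintro _ ⟨k, rfl⟩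
        show autE n (Θ h k.1) ∈ _
        rw [hΘ_val h k.1 k.2]
        exact Subgroup.subset_closure ⟨k.1, rfl⟩
    constructor
    · intro hEv
      have h2 := trans_succ_to_loc (hgW h) x₀ (hTW h) (hTroot h) (hTbase h) hEv
      exact (trans_congr_closure hcl).mp h2
    · intro hQ
      exact trans_succ_of_loc (hgW h) x₀ (hTc h) (hTW h) (hTroot h)
        ((trans_congr_closure hcl).mpr hQ)
  have e3 : Nat.card {h : Fin j × X → Vtx X n → ↥H //
      Trans (n + 1) (Set.range fun i => autE (n + 1) (combine n j σ h i))} =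
      Nat.card {h' : Fin j × X → Vtx X n → ↥H //
        Trans n (Set.range fun k : {k : Fin j × X // k ∉ Tr} => autE n (h' k.1))} := by
    rw [Nat.card_congr (Equiv.subtypeEquivRight hEv_iff)]
    exact Nat.card_congr (Equiv.subtypeEquiv (Equiv.ofBijective Θ hΘ_bij) (fun h => Iff.rfl))
  rw [e3]
  have e4 := card_split (V := Vtx X n → ↥H) Tr
    (fun hk : {k : Fin j × X // k ∉ Tr} → (Vtx X n → ↥H) =>
      Trans n (Set.range fun k : {k : Fin j × X // k ∉ Tr} => autE n (hk k)))
  rw [e4]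
  congr 1
  haveI : Fintype {k : Fin j × X // k ∉ Tr} := Fintype.ofFinite _
  have eK : Fin (Nat.card {k : Fin j × X // k ∉ Tr}) ≃ {k : Fin j × X // k ∉ Tr} :=
    (Fintype.equivFinOfCardEq (Nat.card_eq_fintype_card (α := {k : Fin j × X // k ∉ Tr})).symm).symm
  exact Nat.card_congr (Equiv.subtypeEquiv (Equiv.arrowCongr eK (Equiv.refl _)).symm
    (fun hk => trans_reindex eK _))

end KeyCount2

section MainCount

open Equiv Subgroup

theorem k_arith {j d : ℕ} (hj : 1 ≤ j) (hd : 1 ≤ d) :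
    j * d - (d - 1) = 1 + (j - 1) * d := by
  obtain ⟨a, rfl⟩ : ∃ a, j = a + 1 := ⟨j - 1, by omega⟩
  obtain ⟨e, rfl⟩ : ∃ e, d = e + 1 := ⟨d - 1, by omega⟩
  have h1 : (a + 1) * (e + 1) = 1 + a * (e + 1) + e := by ring
  simp only [Nat.add_sub_cancel]
  omega

theorem exp_arith {j d c : ℕ} (hj : 1 ≤ j) (hd : 1 ≤ d) :
    j + ((1 + (j - 1) * d) * c + c * (d - 1)) = j * (1 + d * c) := by
  obtain ⟨a, rfl⟩ : ∃ a, j = a + 1 := ⟨j - 1, by omega⟩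
  obtain ⟨e, rfl⟩ : ∃ e, d = e + 1 := ⟨d - 1, by omega⟩
  simp only [Nat.add_sub_cancel]
  ring

theorem counting {X : Type*} [Finite X] (H : Subgroup (Equiv.Perm X)) (hX : 2 ≤ Nat.card X) :
    ∀ n j : ℕ, 1 ≤ j →
      (Nat.card {φ : Fin j → Vtx X n → ↥H //
          Trans n (Set.range fun i => autE n (φ i))} : ℝ) =
        (∏ ℓ ∈ Finset.range n, transProb H (1 + (j - 1) * Nat.card X ^ ℓ)) *
          (Nat.card ↥H : ℝ) ^ (j * Nat.card (Vtx X n)) := by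
  intro n
  induction n with
  | zero =>
      intro j hj
      have h1 : Nat.card {φ : Fin j → Vtx X 0 → ↥H //
          Trans 0 (Set.range fun i => autE 0 (φ i))} = 1 := by
        rw [Nat.card_congr (Equiv.subtypeUnivEquiv (fun φ => trans_zero _))]
        simp [Nat.card_fun, Nat.card_of_isEmpty]
      rw [h1]
      simp [Nat.card_of_isEmpty]
  | succ n IH =>
      intro j hj
      classical
      haveI := Fintype.ofFinite X
      haveI hne : Nonempty X := (Nat.card_pos_iff.mp (by omega)).1
      have x₀ : X := Classical.arbitrary X
      have hd1 : 1 ≤ Nat.card X := by omega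
      have hm1 : 1 ≤ 1 + (j - 1) * Nat.card X := by omega
      -- Step 1 : fiber decomposition over the root layer
      haveI : Fintype (Fin j → ↥H) := Fintype.ofFinite _
      haveI : ∀ σ : Fin j → ↥H, Fintype {h : Fin j × X → Vtx X n → ↥H //
          Trans (n + 1) (Set.range fun i => autE (n + 1) (combine n j σ h i))} :=
        fun σ => Fintype.ofFinite _
      have E1 : {φ : Fin j → Vtx X (n + 1) → ↥H //
            Trans (n + 1) (Set.range fun i => autE (n + 1) (φ i))} ≃
          Σ σ : Fin j → ↥H, {h : Fin j × X → Vtx X n → ↥H //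
            Trans (n + 1) (Set.range fun i => autE (n + 1) (combine n j σ h i))} :=
        ((combineEquiv n j).subtypeEquiv (fun p => Iff.rfl)).symm.trans
          (Equiv.subtypeProdEquivSigmaSubtype
            (fun σ h => Trans (n + 1) (Set.range fun i => autE (n + 1) (combine n j σ h i))))
      have hsum : Nat.card {φ : Fin j → Vtx X (n + 1) → ↥H //
            Trans (n + 1) (Set.range fun i => autE (n + 1) (φ i))} =
          ∑ σ : Fin j → ↥H, Nat.card {h : Fin j × X → Vtx X n → ↥H //
            Trans (n + 1) (Set.range fun i => autE (n + 1) (combine n j σ h i))} := by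
        rw [Nat.card_congr E1, Nat.card_eq_fintype_card, Fintype.card_sigma]
        exact Finset.sum_congr rfl (fun σ _ => (Nat.card_eq_fintype_card).symm)
      -- Step 2 : the per-fiber count
      have key : ∀ σ : Fin j → ↥H,
          Nat.card {h : Fin j × X → Vtx X n → ↥H //
            Trans (n + 1) (Set.range fun i => autE (n + 1) (combine n j σ h i))} =
          if (∀ x y : X, ∃ τ ∈ Subgroup.closure
              (Set.range fun i => ((σ i : Equiv.Perm X))), τ x = y)
          then Nat.card {ψ : Fin (1 + (j - 1) * Nat.card X) → Vtx X n → ↥H //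
              Trans n (Set.range fun t => autE n (ψ t))} *
            (Nat.card ↥H ^ Nat.card (Vtx X n)) ^ (Nat.card X - 1)
          else 0 := by
        intro σ
        by_cases hroot : ∀ x y : X, ∃ τ ∈ Subgroup.closure
            (Set.range fun i => ((σ i : Equiv.Perm X))), τ x = y
        · rw [if_pos hroot]
          haveI : Nonempty (Fin j) := ⟨⟨0, hj⟩⟩
          obtain ⟨δ, pr, htree⟩ :=
            exists_tree x₀ (fun i => ((σ i : Equiv.Perm X))) (fun y => hroot x₀ y)
          have hδ : ∀ y, y ≠ x₀ → δ (pr y).2 < δ y := fun y hy => (htree y hy).2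
          have htree1 : ∀ y, y ≠ x₀ → (↑(σ (pr y).1) : Equiv.Perm X) (pr y).2 = y :=
            fun y hy => (htree y hy).1
          rw [key_count σ x₀ δ pr hδ htree1]
          have hinj : Set.InjOn pr {y | y ≠ x₀} := by
            intro y hy y' hy' he
            have h1 := htree1 y hy
            have h2 := htree1 y' hy'
            rw [← h1, ← h2, he]
          have hTr : Nat.card {k : Fin j × X // k ∈ pr '' {y | y ≠ x₀}} = Nat.card X - 1 := by
            show Nat.card ↥(pr '' {y | y ≠ x₀}) = Nat.card X - 1
            rw [Nat.card_coe_set_eq, Set.ncard_image_of_injOn hinj,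
              ← Nat.card_coe_set_eq]
            show Nat.card {y : X // y ≠ x₀} = Nat.card X - 1
            rw [Nat.card_eq_fintype_card]
            have hcompl := Fintype.card_subtype_compl (fun y : X => y = x₀)
            rw [Fintype.card_subtype_eq] at hcompl
            rw [hcompl, Nat.card_eq_fintype_card]
          have hK : Nat.card {k : Fin j × X // k ∉ pr '' {y | y ≠ x₀}} =
              1 + (j - 1) * Nat.card X := by
            rw [Nat.card_eq_fintype_card, Fintype.card_subtype_compl, Fintype.card_prod,
              Fintype.card_fin]
            have h1 : Fintype.card {k : Fin j × X // k ∈ pr '' {y | y ≠ x₀}} =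
                Nat.card X - 1 := by
              rw [← Nat.card_eq_fintype_card]
              exact hTr
            rw [h1, ← Nat.card_eq_fintype_card (α := X)]
            exact k_arith hj hd1
          rw [hK, Nat.card_fun, Nat.card_fun, hTr]
        · rw [if_neg hroot]
          have hemp : IsEmpty {h : Fin j × X → Vtx X n → ↥H //
              Trans (n + 1) (Set.range fun i => autE (n + 1) (combine n j σ h i))} := by
            constructor
            rintro ⟨h, hEv⟩
            apply hroot
            intro x y
            obtain ⟨τ, hτ, he⟩ :=
              trans_root (fun i => autE_mem (n + 1) (combine n j σ h i)) hEv x y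
            refine ⟨τ, ?_, he⟩
            have hrw : (fun i => rootOf (autE_mem (n + 1) (combine n j σ h i))) =
                fun i => ((σ i : Equiv.Perm X)) := funext fun i => combine_root σ h i
            rwa [hrw] at hτ
          exact Nat.card_of_isEmpty
      -- Step 3 : summation
      have hsum2 : Nat.card {φ : Fin j → Vtx X (n + 1) → ↥H //
            Trans (n + 1) (Set.range fun i => autE (n + 1) (φ i))} =
          Nat.card {t : Fin j → ↥H // ∀ x y : X, ∃ τ ∈ Subgroup.closure
              (Set.range fun i => ((t i : Equiv.Perm X))), τ x = y} *
            (Nat.card {ψ : Fin (1 + (j - 1) * Nat.card X) → Vtx X n → ↥H //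
              Trans n (Set.range fun t => autE n (ψ t))} *
            (Nat.card ↥H ^ Nat.card (Vtx X n)) ^ (Nat.card X - 1)) := by
        rw [hsum, Finset.sum_congr rfl (fun σ _ => key σ), ← Finset.sum_filter,
          Finset.sum_const, smul_eq_mul]
        congr 1
        rw [Nat.card_eq_fintype_card, Fintype.card_subtype]
      -- Step 4 : real arithmetic
      rw [hsum2]
      have hHpos : (0 : ℝ) < (Nat.card ↥H : ℝ) := by
        have : 0 < Nat.card ↥H := Nat.card_pos
        exact_mod_cast this
      have hR : (Nat.card {t : Fin j → ↥H // ∀ x y : X, ∃ τ ∈ Subgroup.closure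
            (Set.range fun i => ((t i : Equiv.Perm X))), τ x = y} : ℝ) =
          transProb H j * (Nat.card ↥H : ℝ) ^ j := by
        unfold transProb
        rw [div_mul_cancel₀]
        positivity
      have hIH := IH (1 + (j - 1) * Nat.card X) hm1
      have hzero : 1 + (j - 1) * Nat.card X ^ 0 = j := by
        simp only [pow_zero, mul_one]
        exact Nat.add_sub_cancel' hj
      have hshift : ∀ ℓ : ℕ, 1 + ((1 + (j - 1) * Nat.card X) - 1) * Nat.card X ^ ℓ =
          1 + (j - 1) * Nat.card X ^ (ℓ + 1) := by
        intro ℓ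
        have h2 : (1 + (j - 1) * Nat.card X) - 1 = (j - 1) * Nat.card X :=
          Nat.add_sub_cancel_left _ _
        rw [h2, pow_succ']
        ring
      have hprod : ∏ ℓ ∈ Finset.range (n + 1),
            transProb H (1 + (j - 1) * Nat.card X ^ ℓ) =
          transProb H j * ∏ ℓ ∈ Finset.range n,
            transProb H (1 + ((1 + (j - 1) * Nat.card X) - 1) * Nat.card X ^ ℓ) := by
        rw [Finset.prod_range_succ', hzero, mul_comm]
        congr 1
        apply Finset.prod_congr rfl
        intro ℓ _
        rw [hshift ℓ]
      push_cast
      rw [hR, hIH, hprod]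
      have hexp := exp_arith (c := Nat.card (Vtx X n)) hj hd1
      rw [card_vtx_succ, ← hexp, pow_add, pow_add, ← pow_mul]
      ring

end MainCount

section Bridge

open MeasureTheory Equiv Subgroup

variable {X : Type*} [Finite X] {H : Subgroup (Equiv.Perm X)}

noncomputable instance : MeasureTheory.Measure.IsMulLeftInvariant (haarPortrait X H) := by
  unfold haarPortrait
  infer_instance

instance : MeasureTheory.IsProbabilityMeasure (haarPortrait X H) := by
  constructor
  have h : haarPortrait X H ↑(⊤ : TopologicalSpace.PositiveCompacts (Portrait X H)) = 1 :=
    MeasureTheory.Measure.haarMeasure_self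
  rwa [TopologicalSpace.PositiveCompacts.coe_top] at h

/-- Restriction of a portrait to the vertices of depth `< n`. -/
def resP (n : ℕ) (ω : Portrait X H) : Vtx X n → ↥H := fun v => ω v.1

theorem cyl_measurable (n : ℕ) (f : Vtx X n → ↥H) :
    MeasurableSet {ω : Portrait X H | resP n ω = f} := by
  have he : {ω : Portrait X H | resP n ω = f} =
      ⋂ v : Vtx X n, {ω : Portrait X H | ω v.1 = f v} := by
    ext ω
    simp only [Set.mem_setOf_eq, Set.mem_iInter]
    constructor
    · intro h v
      exact congrFun h v
    · intro h
      funext v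
      exact h v
  rw [he]
  refine MeasurableSet.iInter (fun v => ?_)
  have ho : IsOpen {ω : Portrait X H | ω v.1 = f v} := by
    have he2 : {ω : Portrait X H | ω v.1 = f v} =
        (fun ω : Portrait X H => ω v.1) ⁻¹' {f v} := rfl
    rw [he2]
    exact (continuous_apply v.1).isOpen_preimage _ (isOpen_discrete _)
  exact ho.measurableSet

theorem cyl_measure (n : ℕ) (f : Vtx X n → ↥H) :
    haarPortrait X H {ω : Portrait X H | resP n ω = f} =
      ((Nat.card (Vtx X n → ↥H) : ENNReal))⁻¹ := by
  classical
  haveI : Fintype (Vtx X n) := Fintype.ofFinite _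
  haveI : Fintype ↥H := Fintype.ofFinite _
  haveI : Fintype (Vtx X n → ↥H) := Fintype.ofFinite _
  have hconst : ∀ f' : Vtx X n → ↥H,
      haarPortrait X H {ω : Portrait X H | resP n ω = f'} =
        haarPortrait X H {ω : Portrait X H | resP n ω = f} := by
    intro f'
    have hpre : {ω : Portrait X H | resP n ω = f} =
        (fun ω => (fun v : List X =>
            if h : v.length < n then f' ⟨v, h⟩ * (f ⟨v, h⟩)⁻¹ else 1) * ω) ⁻¹'
          {ω : Portrait X H | resP n ω = f'} := by
      ext ω
      simp only [Set.mem_setOf_eq, Set.mem_preimage]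
      constructor
      · intro h
        funext v
        show (if hh : (v.1 : List X).length < n then f' ⟨v.1, hh⟩ * (f ⟨v.1, hh⟩)⁻¹ else 1) *
            ω v.1 = f' v
        rw [dif_pos v.2]
        have h1 : ω v.1 = f v := congrFun h v
        rw [h1]
        change f' v * (f v)⁻¹ * f v = f' v
        group
      · intro h
        funext v
        have h1 := congrFun h v
        have h2 : (if hh : (v.1 : List X).length < n then f' ⟨v.1, hh⟩ * (f ⟨v.1, hh⟩)⁻¹
            else 1) * ω v.1 = f' v := h1
        rw [dif_pos v.2] at h2
        show ω v.1 = f v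
        rw [mul_assoc] at h2
        change f' v * ((f v)⁻¹ * ω v.1) = f' v at h2
        have h6 : f' v * ((f v)⁻¹ * ω v.1) = f' v * 1 := by rw [h2, mul_one]
        have h5 : (f v)⁻¹ * ω v.1 = 1 := mul_left_cancel h6
        exact (inv_mul_eq_one.mp h5).symm
    rw [hpre, measure_preimage_mul]
  have hpart : (Set.univ : Set (Portrait X H)) =
      ⋃ f' : Vtx X n → ↥H, {ω : Portrait X H | resP n ω = f'} := by
    ext ω
    simp only [Set.mem_univ, Set.mem_iUnion, Set.mem_setOf_eq, true_iff]
    exact ⟨resP n ω, rfl⟩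
  have hdisj : Pairwise (Function.onFun Disjoint
      (fun f' : Vtx X n → ↥H => {ω : Portrait X H | resP n ω = f'})) := by
    intro a b hab
    rw [Function.onFun, Set.disjoint_left]
    rintro ω ha hb
    exact hab (ha.symm.trans hb)
  have hsum := measure_iUnion (μ := haarPortrait X H) hdisj (fun f' => cyl_measurable n f')
  rw [← hpart, measure_univ, tsum_fintype,
    Finset.sum_congr rfl (fun f' _ => hconst f'), Finset.sum_const, Finset.card_univ] at hsum
  have hne0 : (Fintype.card (Vtx X n → ↥H) : ENNReal) ≠ 0 := by
    exact_mod_cast Fintype.card_ne_zero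
  have hnetop : (Fintype.card (Vtx X n → ↥H) : ENNReal) ≠ ⊤ := ENNReal.natCast_ne_top _
  have h1 : (Fintype.card (Vtx X n → ↥H) : ENNReal) *
      haarPortrait X H {ω : Portrait X H | resP n ω = f} = 1 := by
    rw [← nsmul_eq_mul]
    exact hsum.symm
  rw [Nat.card_eq_fintype_card]
  calc haarPortrait X H {ω : Portrait X H | resP n ω = f}
      = (Fintype.card (Vtx X n → ↥H) : ENNReal)⁻¹ *
        ((Fintype.card (Vtx X n → ↥H) : ENNReal) *
          haarPortrait X H {ω : Portrait X H | resP n ω = f}) := by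
        rw [← mul_assoc, ENNReal.inv_mul_cancel hne0 hnetop, one_mul]
    _ = (Fintype.card (Vtx X n → ↥H) : ENNReal)⁻¹ := by rw [h1, mul_one]

theorem pi_cyl_measurable {j n : ℕ} (y : Fin j → Vtx X n → ↥H) :
    MeasurableSet {ω : Fin j → Portrait X H | ∀ i, resP n (ω i) = y i} := by
  have he : {ω : Fin j → Portrait X H | ∀ i, resP n (ω i) = y i} =
      Set.pi Set.univ (fun i => {ωi : Portrait X H | resP n ωi = y i}) := by
    ext ω
    simp [Set.mem_pi]
  rw [he]
  exact MeasurableSet.univ_pi (fun i => cyl_measurable n (y i))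

theorem pi_cyl_measure {j n : ℕ} (y : Fin j → Vtx X n → ↥H) :
    (MeasureTheory.Measure.pi fun _ : Fin j => haarPortrait X H)
        {ω : Fin j → Portrait X H | ∀ i, resP n (ω i) = y i} =
      (((Nat.card (Vtx X n → ↥H) : ENNReal))⁻¹) ^ j := by
  have he : {ω : Fin j → Portrait X H | ∀ i, resP n (ω i) = y i} =
      Set.pi Set.univ (fun i => {ωi : Portrait X H | resP n ωi = y i}) := by
    ext ω
    simp [Set.mem_pi]
  rw [he, MeasureTheory.Measure.pi_pi]
  rw [Finset.prod_congr rfl (fun i _ => cyl_measure n (y i)), Finset.prod_const,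
    Finset.card_univ, Fintype.card_fin]

theorem event_measure {j n : ℕ} (P : (Fin j → Vtx X n → ↥H) → Prop) :
    (MeasureTheory.Measure.pi fun _ : Fin j => haarPortrait X H)
        {ω : Fin j → Portrait X H | P (fun i => resP n (ω i))} =
      (Nat.card {y : Fin j → Vtx X n → ↥H // P y} : ENNReal) *
        (((Nat.card (Vtx X n → ↥H) : ENNReal))⁻¹) ^ j := by
  classical
  haveI : Fintype (Vtx X n) := Fintype.ofFinite _
  haveI : Fintype ↥H := Fintype.ofFinite _
  haveI : Fintype {y : Fin j → Vtx X n → ↥H // P y} := Fintype.ofFinite _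
  have he : {ω : Fin j → Portrait X H | P (fun i => resP n (ω i))} =
      ⋃ y : {y : Fin j → Vtx X n → ↥H // P y},
        {ω : Fin j → Portrait X H | ∀ i, resP n (ω i) = y.1 i} := by
    ext ω
    simp only [Set.mem_setOf_eq, Set.mem_iUnion]
    constructor
    · intro h
      exact ⟨⟨fun i => resP n (ω i), h⟩, fun i => rfl⟩
    · rintro ⟨y, hres⟩
      have hy : (fun i => resP n (ω i)) = y.1 := funext hres
      rw [hy]
      exact y.2
  have hdisj : Pairwise (Function.onFun Disjoint
      (fun y : {y : Fin j → Vtx X n → ↥H // P y} =>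
        {ω : Fin j → Portrait X H | ∀ i, resP n (ω i) = y.1 i})) := by
    intro a b hab
    rw [Function.onFun, Set.disjoint_left]
    rintro ω ha hb
    apply hab
    apply Subtype.ext
    funext i
    rw [← ha i, hb i]
  rw [he, measure_iUnion hdisj (fun y => pi_cyl_measurable y.1), tsum_fintype,
    Finset.sum_congr rfl (fun y _ => pi_cyl_measure y.1), Finset.sum_const,
    Finset.card_univ, nsmul_eq_mul, Nat.card_eq_fintype_card, Nat.card_eq_fintype_card]

end Bridge

/-- **The probability that a random subgroup is transitive on level `n`**
(Corollary 3.5).  Let `G` be the subgroup of `Γ(H)` abstractly generated by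
`j ≥ 1` independent Haar random elements.  Then for every `n` the probability
that `G` acts transitively on level `n` of the tree equals
`∏_{ℓ=0}^{n-1} q(1 + (j-1)|X|^ℓ)`. -/
theorem probability_transitive_on_level (X : Type*) [Finite X]
    (hX : 2 ≤ Nat.card X) (H : Subgroup (Equiv.Perm X))
    (j : ℕ) (hj : 1 ≤ j) (n : ℕ) :
    ((Measure.pi fun _ : Fin j => haarPortrait X H)
        {ω : Fin j → Portrait X H |
          ∀ v w : List X, v.length = n → w.length = n →
            ∃ g ∈ Subgroup.closure (Set.range fun i => randAut (ω i)), g v = w}).toReal =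
      ∏ ℓ ∈ Finset.range n, transProb H (1 + (j - 1) * Nat.card X ^ ℓ) := by
  classical
  have hev : {ω : Fin j → Portrait X H |
      ∀ v w : List X, v.length = n → w.length = n →
        ∃ g ∈ Subgroup.closure (Set.range fun i => randAut (ω i)), g v = w} =
      {ω : Fin j → Portrait X H |
        (fun y : Fin j → Vtx X n → ↥H =>
          Trans n (Set.range fun i => autE n (y i))) (fun i => resP n (ω i))} := by
    ext ω
    simp only [Set.mem_setOf_eq]
    constructor
    · intro h
      exact trans_congr (H := H) (f := fun i v => ((ω i v : Equiv.Perm X)))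
        (f' := fun i => extP n (resP n (ω i))) (fun i v => (ω i v).2)
        (fun i v => extP_mem n _ v)
        (fun i v hv => by
          show ((ω i v : Equiv.Perm X)) = extP n (resP n (ω i)) v
          unfold extP
          rw [dif_pos hv]
          rfl) h
    · intro h
      exact trans_congr (H := H) (f := fun i => extP n (resP n (ω i)))
        (f' := fun i v => ((ω i v : Equiv.Perm X))) (fun i v => extP_mem n _ v)
        (fun i v => (ω i v).2)
        (fun i v hv => by
          show extP n (resP n (ω i)) v = ((ω i v : Equiv.Perm X))
          unfold extP
          rw [dif_pos hv]
          rfl) h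
  rw [hev, event_measure (fun y : Fin j → Vtx X n → ↥H =>
    Trans n (Set.range fun i => autE n (y i)))]
  rw [ENNReal.toReal_mul, ENNReal.toReal_pow, ENNReal.toReal_inv, ENNReal.toReal_natCast,
    ENNReal.toReal_natCast]
  have hN := counting H hX n j hj
  rw [hN]
  have hv : (Nat.card (Vtx X n → ↥H) : ℝ) = (Nat.card ↥H : ℝ) ^ Nat.card (Vtx X n) := by
    rw [Nat.card_fun]
    push_cast
    ring
  have hHpos : (0 : ℝ) < (Nat.card ↥H : ℝ) := by
    have : 0 < Nat.card ↥H := Nat.card_pos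
    exact_mod_cast this
  rw [hv, inv_pow, ← pow_mul, mul_comm (Nat.card (Vtx X n)) j, mul_assoc,
    mul_inv_cancel₀ (pow_ne_zero _ (ne_of_gt hHpos)), mul_one]

end TreeWreath
end

section
/- Let G be a finite p-group, let n, m ≥ 0, and let w_1, …, w_k be elements of the free group on the letters g_1, …, g_{n+m}. Assume that the exponent sum vectors of w_1, …, w_k, restricted to the first n coordinates, are linearly independent over 𝔽_p. Fix arbitrary elements g_{n+1}, …, g_{n+m} ∈ G. Then the substitution map G^n → G^k sending (g_1, …, g_n) to (w̄_1, …, w̄_k), where w̄_i denotes the evaluation of w_i in G, covers G^k evenly: it is surjective and every fiber has exactly |G|^{n−k} elements. -/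
/-!
Induction on `|G|`. A nontrivial `p`-group has a central subgroup `Z ≅ 𝔽_p`, and modulo `Z` the
word map covers `(G/Z)^k` evenly by induction. The lifts of a point of `(G/Z)^n` are the `t₀ z`
with `z ∈ Z^n`; as `Z` is central, `w̄_j(t₀ z) = w̄_j(t₀) · (M z)_j` when `Z` is identified with
`𝔽_p`, where `M` is the matrix of exponent sums in the first `n` letters. So the lifts lying over `y` are the solutions
of an affine system `M z = β` over `𝔽_p` with independent rows, of which there are `p^{n-k}`.
Each fibre thus has `|G/Z|^{n-k} p^{n-k} = |G|^{n-k}` elements, and in particular is nonempty.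
-/

namespace TreeWreath

def expSumVec {ι : Type*} [DecidableEq ι] (w : FreeGroup ι) : ι → ℤ :=
  Multiplicative.toAdd
    (FreeGroup.lift (fun i => Multiplicative.ofAdd (Pi.single i (1 : ℤ))) w)

open Multiplicative
open scoped Matrix

section ExpSum

variable {ι : Type*} [DecidableEq ι]

@[simp]
theorem expSumVec_one : expSumVec (1 : FreeGroup ι) = 0 := by
  simp [expSumVec]

@[simp]
theorem expSumVec_of (i : ι) : expSumVec (FreeGroup.of i) = Pi.single i 1 := by
  simp [expSumVec]

@[simp]
theorem expSumVec_mul (x y : FreeGroup ι) : expSumVec (x * y) = expSumVec x + expSumVec y := by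
  simp [expSumVec]

@[simp]
theorem expSumVec_inv (x : FreeGroup ι) : expSumVec x⁻¹ = -expSumVec x := by
  simp [expSumVec]

theorem lift_ofAdd_eq_ofAdd_sum_expSumVec [Fintype ι] {A : Type*} [AddCommGroup A] (v : ι → A)
    (x : FreeGroup ι) :
    FreeGroup.lift (fun i => ofAdd (v i)) x = ofAdd (∑ i, expSumVec x i • v i) := by
  induction x using FreeGroup.induction_on with
  | C1 => simp
  | of i => simp [Pi.single_apply]
  | inv_of i h => simp [h]
  | mul x y hx hy => simp [hx, hy, add_smul, Finset.sum_add_distrib]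

end ExpSum

theorem map_lift_apply {ι G H : Type*} [Group G] [Group H] (φ : G →* H) (u : ι → G)
    (x : FreeGroup ι) : φ (FreeGroup.lift u x) = FreeGroup.lift (φ ∘ u) x :=
  FreeGroup.lift_unique (φ.comp (FreeGroup.lift u)) (by simp)

theorem lift_mul_of_mem_center {ι G : Type*} [Group G] (u z : ι → G)
    (hz : ∀ i, z i ∈ Subgroup.center G) (x : FreeGroup ι) :
    FreeGroup.lift (u * z) x = FreeGroup.lift u x * FreeGroup.lift z x := by
  have hZ : ∀ x, FreeGroup.lift z x ∈ Subgroup.center G := fun x =>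
    FreeGroup.range_lift_le (by rintro _ ⟨i, rfl⟩; exact hz i) ⟨x, rfl⟩
  induction x using FreeGroup.induction_on with
  | C1 => simp
  | of i => simp
  | inv_of i =>
    simp only [map_inv, Pi.mul_apply, FreeGroup.lift_apply_of, mul_inv_rev]
    exact (Subgroup.mem_center_iff.mp (inv_mem (hz i)) _).symm
  | mul x y hx hy =>
    simp only [map_mul, hx, hy]
    exact Commute.mul_mul_mul_comm (Subgroup.mem_center_iff.mp (hZ x) _).symm _ _

theorem card_mulVec_fiber_of_linearIndependent_row {K m n : Type*} [Field K] [Finite K]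
    [Fintype m] [Fintype n] {M : Matrix m n K} (hM : LinearIndependent K M.row) (b : m → K) :
    Nat.card {v // M *ᵥ v = b} = Nat.card K ^ (Fintype.card n - Fintype.card m) := by
  classical
  have hrange : Module.finrank K (LinearMap.range M.mulVecLin) = Fintype.card m := hM.rank_matrix
  have hsurj : Function.Surjective M.mulVecLin := LinearMap.range_eq_top.mp
    (Submodule.eq_top_of_finrank_eq (by rw [hrange, Module.finrank_fintype_fun_eq_card]))
  have hker : Module.finrank K (LinearMap.ker M.mulVecLin) = Fintype.card n - Fintype.card m := by
    have := M.mulVecLin.finrank_range_add_finrank_ker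
    rw [hrange, Module.finrank_fintype_fun_eq_card] at this
    omega
  rw [← hker, ← Module.natCard_eq_pow_finrank]
  exact Nat.card_congr (M.mulVecLin.toAddMonoidHom.fiberEquivKerOfSurjective hsurj b)

theorem card_fiber_eq_card_mul {X Y X' Y' : Type*} [Finite X] [Finite X'] {f : X → Y}
    {f' : X' → Y'} {q : X → X'} {q' : Y → Y'} (hf : ∀ x, f' (q x) = q' (f x)) (y : Y)
    {b : ℕ}
    (hb : ∀ x', f' x' = q' y → Nat.card {x // q x = x' ∧ f x = y} = b) :
    Nat.card {x // f x = y} = Nat.card {x' // f' x' = q' y} * b := by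
  have := Fintype.ofFinite {x' // f' x' = q' y}
  let g : {x // f x = y} → {x' // f' x' = q' y} := fun x =>
    ⟨q x, (hf x).trans (congrArg q' x.2)⟩
  calc Nat.card {x // f x = y}
      = Nat.card (Σ x', {x // g x = x'}) := Nat.card_congr (Equiv.sigmaFiberEquiv g).symm
    _ = ∑ x', Nat.card {x // g x = x'} := Nat.card_sigma
    _ = ∑ _x' : {x' // f' x' = q' y}, b := Finset.sum_congr rfl fun x' _ => by
        rw [← hb x' x'.2]
        exact Nat.card_congr ((Equiv.subtypeEquivRight fun x => Subtype.ext_iff).trans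
          ((Equiv.subtypeSubtypeEquivSubtypeInter _ (q · = x')).trans
            (Equiv.subtypeEquivRight fun _ => and_comm)))
    _ = _ := by simp

theorem card_quotient_fiber_eq {A G α : Type*} [Group A] [Group G] {ι : A →* G}
    (hι : Function.Injective ι) [ι.range.Normal] (t₀ : α → G) (P : (α → G) → Prop) :
    Nat.card {t // QuotientGroup.mk' ι.range ∘ t = QuotientGroup.mk' ι.range ∘ t₀ ∧ P t} =
      Nat.card {z : α → A // P (t₀ * fun i => ι (z i))} := by
  have hcoset (z : α → A) : QuotientGroup.mk' ι.range ∘ (t₀ * fun i => ι (z i)) =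
      QuotientGroup.mk' ι.range ∘ t₀ := by
    funext i
    simp
  let e (z : {z : α → A // P (t₀ * fun i => ι (z i))}) :
      {t // QuotientGroup.mk' ι.range ∘ t = QuotientGroup.mk' ι.range ∘ t₀ ∧ P t} :=
    ⟨t₀ * fun i => ι (z.1 i), hcoset z.1, z.2⟩
  refine (Nat.card_congr (Equiv.ofBijective e ⟨fun z z' h => ?_, fun t => ?_⟩)).symm
  · ext i
    exact hι (mul_left_cancel (congr_fun (congrArg Subtype.val h) i))
  · have hmem : ∀ i, ∃ a, ι a = (t₀ i)⁻¹ * t.1 i := fun i =>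
      QuotientGroup.eq.mp (congr_fun t.2.1 i).symm
    choose z hz using hmem
    have ht : (t₀ * fun i => ι (z i)) = t.1 := by
      funext i
      simp [hz]
    exact ⟨⟨z, ht ▸ t.2.2⟩, Subtype.ext ht⟩

theorem IsPGroup.exists_injective_zmod_center {p : ℕ} (hp : p.Prime) {G : Type*} [Group G]
    [Finite G] [Nontrivial G] (hG : IsPGroup p G) :
    ∃ ι : Multiplicative (ZMod p) →* G,
      Function.Injective ι ∧ ∀ a, ι a ∈ Subgroup.center G := by
  have := Fact.mk hp
  have := hG.center_nontrivial
  obtain ⟨e, he, hcard⟩ := (hG.to_subgroup (Subgroup.center G)).nontrivial_iff_card.mp this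
  obtain ⟨H, hH⟩ := Sylow.exists_subgroup_card_pow_prime p (n := 1)
    (hcard ▸ pow_dvd_pow p he)
  rw [pow_one] at hH
  subst hH
  have := isCyclic_of_prime_card (α := H) rfl
  exact ⟨(Subgroup.center G).subtype.comp (H.subtype.comp (zmodCyclicMulEquiv this).toMonoidHom),
    (Subgroup.subtype_injective _).comp ((Subgroup.subtype_injective _).comp
      (zmodCyclicMulEquiv this).injective), fun a => Subtype.prop _⟩

section WordMap

variable {n m k : ℕ} (w : Fin k → FreeGroup (Fin (n + m)))

def wordMap {G : Type*} [Group G] (c : Fin m → G) (t : Fin n → G) : Fin k → G :=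
  fun j => FreeGroup.lift (Fin.append t c) (w j)

def exponentMatrix (R : Type*) [Ring R] : Matrix (Fin k) (Fin n) R :=
  .of fun j i => (expSumVec (w j) (Fin.castAdd m i) : R)

theorem map_wordMap {G H : Type*} [Group G] [Group H] (φ : G →* H) (c : Fin m → G)
    (t : Fin n → G) : φ ∘ wordMap w c t = wordMap w (φ ∘ c) (φ ∘ t) := by
  funext j
  simp only [Function.comp_apply, wordMap, map_lift_apply]
  congr 2
  funext i
  refine Fin.addCases (fun i => ?_) (fun i => ?_) i <;> simp

theorem wordMap_mul_central {R G : Type*} [Ring R] [Group G] (ι : Multiplicative R →* G)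
    (hι : ∀ a, ι a ∈ Subgroup.center G) (c : Fin m → G) (t : Fin n → G)
    (z : Fin n → R) :
    wordMap w c (t * fun i => ι (ofAdd (z i))) =
      wordMap w c t * fun j => ι (ofAdd ((exponentMatrix w R *ᵥ z) j)) := by
  funext j
  have happend : Fin.append (t * fun i => ι (ofAdd (z i))) c =
      Fin.append t c * ι ∘ fun i => ofAdd (Fin.append z 0 i) := by
    funext i
    refine Fin.addCases (fun i => ?_) (fun i => ?_) i <;> simp
  simp only [wordMap, Pi.mul_apply, happend]
  rw [lift_mul_of_mem_center _ (ι ∘ _) (fun i => hι _), ← map_lift_apply,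
    lift_ofAdd_eq_ofAdd_sum_expSumVec, Fin.sum_univ_add]
  simp [exponentMatrix, Matrix.mulVec, dotProduct, zsmul_eq_mul, ofAdd_sum]

theorem card_wordMap_mul_central_fiber {K G : Type*} [Field K] [Finite K] [Group G]
    (hw : LinearIndependent K (exponentMatrix w K).row) {ι : Multiplicative K →* G}
    (hι : Function.Injective ι) (hcen : ∀ a, ι a ∈ Subgroup.center G) (c : Fin m → G)
    {t₀ : Fin n → G} {y : Fin k → G}
    (hy : ∀ j, (wordMap w c t₀ j)⁻¹ * y j ∈ ι.range) :
    Nat.card {z : Fin n → K // wordMap w c (t₀ * fun i => ι (ofAdd (z i))) = y} =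
      Nat.card K ^ (n - k) := by
  have hy' (j : Fin k) : ∃ b : K, ι (ofAdd b) = (wordMap w c t₀ j)⁻¹ * y j :=
    let ⟨a, ha⟩ := hy j; ⟨a.toAdd, ha⟩
  choose β hβ using hy'
  have hiff (z : Fin n → K) :
      wordMap w c (t₀ * fun i => ι (ofAdd (z i))) = y ↔ exponentMatrix w K *ᵥ z = β := by
    rw [wordMap_mul_central w ι hcen, funext_iff, funext_iff]
    refine forall_congr' fun j => ?_
    rw [Pi.mul_apply, ← eq_inv_mul_iff_mul_eq, ← hβ j, hι.eq_iff, ofAdd.apply_eq_iff_eq]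
  rw [Nat.card_congr (Equiv.subtypeEquivRight hiff), card_mulVec_fiber_of_linearIndependent_row hw,
    Fintype.card_fin, Fintype.card_fin]

theorem card_wordMap_fiber {p : ℕ} (hp : p.Prime)
    (hw : LinearIndependent (ZMod p) (exponentMatrix w (ZMod p)).row) {G : Type*} [Group G]
    [Finite G] (hG : IsPGroup p G) (c : Fin m → G) (y : Fin k → G) :
    Nat.card {t // wordMap w c t = y} = Nat.card G ^ (n - k) := by
  induction hN : Nat.card G using Nat.strong_induction_on generalizing G with
  | _ N ih =>
  subst hN
  rcases subsingleton_or_nontrivial G with _ | _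
  · have : Unique {t // wordMap w c t = y} :=
      ⟨⟨⟨1, Subsingleton.elim _ _⟩⟩, fun _ => Subsingleton.elim _ _⟩
    simp
  obtain ⟨ι, hι, hcen⟩ := IsPGroup.exists_injective_zmod_center hp hG
  have hnormal : ι.range.Normal := ⟨by
    rintro _ ⟨a, rfl⟩ g
    rw [Subgroup.mem_center_iff.mp (hcen a) g, mul_inv_cancel_right]
    exact ⟨a, rfl⟩⟩
  have := Fact.mk hp
  let π := QuotientGroup.mk' ι.range
  have hcard : Nat.card G = Nat.card (G ⧸ ι.range) * p := by
    rw [Subgroup.card_eq_card_quotient_mul_card_subgroup ι.range,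
      ← Nat.card_congr (MonoidHom.ofInjective hι).toEquiv]
    simp
  have hlt : Nat.card (G ⧸ ι.range) < Nat.card G := by
    rw [hcard]; exact lt_mul_right Nat.card_pos hp.one_lt
  have hlifts (s : Fin n → G ⧸ ι.range) (hs : wordMap w (π ∘ c) s = π ∘ y) :
      Nat.card {t // π ∘ t = s ∧ wordMap w c t = y} = p ^ (n - k) := by
    obtain ⟨t₀, rfl⟩ := (QuotientGroup.mk'_surjective ι.range).comp_left s
    rw [card_quotient_fiber_eq hι t₀ (wordMap w c · = y)]
    have hcount := card_wordMap_mul_central_fiber w hw hι hcen c fun j =>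
      QuotientGroup.eq.mp (congr_fun ((map_wordMap w π c t₀).trans hs) j)
    rwa [Nat.card_zmod] at hcount
  rw [card_fiber_eq_card_mul (fun t => (map_wordMap w π c t).symm) y hlifts,
    ih _ hlt (hG.to_quotient _) _ _ rfl, hcard, mul_pow]

end WordMap

/-- **Linear and probabilistic independence** (Lemma 4.7).
Let `G` be a finite `p`-group and let `w_1, …, w_k` be words in the letters
`g_1, …, g_{n+m}` whose exponent sum vectors, restricted to the first `n`
coordinates, are linearly independent mod `p`.  Fix `g_{n+1}, …, g_{n+m} ∈ G`.
Then the substitution map `G^n → G^k`,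
`(g_1, …, g_n) ↦ (w̄_1, …, w̄_k)`, covers `G^k` evenly: it is surjective and
each fiber has exactly `|G|^{n-k}` elements. -/
theorem word_map_covers_evenly (p : ℕ) (hp : p.Prime)
    (G : Type*) [Group G] [Finite G] (hG : IsPGroup p G)
    (n m k : ℕ) (w : Fin k → FreeGroup (Fin (n + m)))
    (hind : LinearIndependent (ZMod p)
      (fun j : Fin k => fun i : Fin n => ((expSumVec (w j) (Fin.castAdd m i) : ℤ) : ZMod p)))
    (c : Fin m → G) :
    Function.Surjective
        (fun t : Fin n → G => fun j : Fin k => FreeGroup.lift (Fin.append t c) (w j)) ∧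
      ∀ y : Fin k → G,
        Nat.card {t : Fin n → G //
            (fun j : Fin k => FreeGroup.lift (Fin.append t c) (w j)) = y} =
          Nat.card G ^ (n - k) := by
  have hfiber (y : Fin k → G) : Nat.card {t // wordMap w c t = y} = Nat.card G ^ (n - k) :=
    card_wordMap_fiber w hp hind hG c y
  refine ⟨fun y => ?_, hfiber⟩
  have : Nonempty {t // wordMap w c t = y} :=
    (Nat.card_pos_iff.mp (hfiber y ▸ pow_pos Nat.card_pos _)).1
  obtain ⟨t, ht⟩ := this.some
  exact ⟨t, ht⟩

end TreeWreath
end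

section
/- Let p be a prime, n ≥ 1, d ≥ 1 and ε ≥ 0. Let G be a subgroup of the direct power Γ_n(p)^d with |G| ≥ |Γ_n(p)|^{d−ε}. Then there exist subgroups H_1, …, H_d of Γ_n(p) such that the direct product H = H_1 × ⋯ × H_d (with H_i sitting in the i-th coordinate) is contained in G and |H| ≥ |Γ_n(p)|^{d(1−ε)}. -/
namespace TreeWreath

/-- The finite iterated wreath product `Γ_n(H)`, realized inside `Γ(H)` as the
subgroup of tree automorphisms whose local action at every vertex of level `≥ n`
is trivial (so it is canonically the `n`-fold wreath power of `H`, acting on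
the tree of depth `n`). -/
def wreathLevel (X : Type*) (H : Subgroup (Equiv.Perm X)) (n : ℕ) :
    Subgroup (Equiv.Perm (List X)) where
  carrier := {g | g ∈ wreath X H ∧
    ∀ v : List X, n ≤ v.length → ∀ x : X, g (v ++ [x]) = g v ++ [x]}
  one_mem' := ⟨one_mem _, fun _ _ _ => rfl⟩
  mul_mem' := by
    rintro g h ⟨hgW, hg⟩ ⟨hhW, hh⟩
    refine ⟨mul_mem hgW hhW, fun v hv x => ?_⟩
    have hlen : n ≤ (h v).length := by
      rw [length_apply_of_mem_wreath hhW]; exact hv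
    simp [Equiv.Perm.mul_apply, hh v hv, hg (h v) hlen]
  inv_mem' := by
    rintro g ⟨hgW, hg⟩
    refine ⟨inv_mem hgW, fun v hv x => ?_⟩
    have hlen : n ≤ (g⁻¹ v).length := by
      rw [length_apply_of_mem_wreath (inv_mem hgW)]; exact hv
    have : g (g⁻¹ v ++ [x]) = v ++ [x] := by
      rw [hg (g⁻¹ v) hlen]; simp
    rw [← this]
    exact Equiv.symm_apply_apply g _

/-- The symmetric `p`-group `Γ_n(p)`: the `n`-fold iterated wreath product of
`C_p`, i.e. a Sylow `p`-subgroup of `Sym(p^n)`. -/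
def GammaLevel (p : ℕ) (n : ℕ) : Subgroup (Equiv.Perm (List (ZMod p))) :=
  wreathLevel (ZMod p) (cyclic p) n


 
open Subgroup in
private theorem subdirect_aux (p n d : ℕ) (hp : p.Prime)
    (hn : 1 ≤ n) (hd : 1 ≤ d) (ε : ℝ) (hε : 0 ≤ ε)
    {Γ : Type*} [Group Γ]
    (G : Subgroup (Fin d → Γ))
    (hG : (Nat.card Γ : ℝ) ^ ((d : ℝ) - ε) ≤ (Nat.card ↥G : ℝ)) :
    ∃ H : Fin d → Subgroup Γ,
      Subgroup.pi Set.univ H ≤ G ∧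
        (Nat.card Γ : ℝ) ^ ((d : ℝ) * (1 - ε)) ≤
          (Nat.card ↥(Subgroup.pi Set.univ H) : ℝ) := by
  classical
  by_cases hN0 : Nat.card Γ = 0
  · refine ⟨fun _ => ⊥, ?_, ?_⟩
    · rw [Subgroup.pi_bot]; exact bot_le
    · rw [Subgroup.pi_bot, Subgroup.card_bot, hN0]
      push_cast
      exact Real.zero_rpow_le_one _
  haveI : Finite Γ := Nat.finite_of_card_ne_zero hN0
  set N : ℕ := Nat.card Γ with hNdef
  have hN1 : (1 : ℝ) ≤ (N : ℝ) := by exact_mod_cast Nat.one_le_iff_ne_zero.mpr hN0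
  have hNpos : (0 : ℝ) < (N : ℝ) := lt_of_lt_of_le one_pos hN1
  set K : Fin d → Subgroup Γ := fun i => G.comap (MonoidHom.mulSingle (fun _ : Fin d => Γ) i)
    with hK
  refine ⟨K, Subgroup.pi_le_iff.mpr fun i => Subgroup.map_comap_le _ _, ?_⟩
  -- cardinality bound for each K i
  have key : ∀ i : Fin d, Nat.card ↥G ≤ Nat.card ↥(K i) * N ^ (d - 1) := by
    intro i
    set φ : ↥G →* ({j : Fin d // j ≠ i} → Γ) :=
      { toFun := fun g j => (g : Fin d → Γ) j
        map_one' := rfl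
        map_mul' := fun _ _ => rfl } with hφ
    have hker : Nat.card ↥φ.ker ≤ Nat.card ↥(K i) := by
      have hinj : Function.Injective (fun g : ↥φ.ker =>
          ((g : Fin d → Γ) i : Γ)) := by
        intro g g' hgg'
        have h1 : ∀ (g : ↥φ.ker) (j : Fin d), j ≠ i → ((g : ↥G) : Fin d → Γ) j = 1 := by
          intro g j hj
          exact congrFun (MonoidHom.mem_ker.mp g.2 : φ g.1 = 1) ⟨j, hj⟩
        have : ((g : ↥G) : Fin d → Γ) = ((g' : ↥G) : Fin d → Γ) := by
          funext j
          by_cases hj : j = i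
          · subst hj; exact hgg'
          · rw [h1 g j hj, h1 g' j hj]
        exact Subtype.ext (Subtype.ext this)
      refine Nat.card_le_card_of_injective
        (fun g => ⟨((g : ↥G) : Fin d → Γ) i, ?_⟩) fun g g' h => hinj (congrArg Subtype.val h)
      · -- membership in K i
        have h1 : ∀ (j : Fin d), j ≠ i → ((g : ↥G) : Fin d → Γ) j = 1 := by
          intro j hj
          exact congrFun (MonoidHom.mem_ker.mp g.2 : φ g.1 = 1) ⟨j, hj⟩
        have heq : Pi.mulSingle i (((g : ↥G) : Fin d → Γ) i) = ((g : ↥G) : Fin d → Γ) := by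
          funext j
          by_cases hj : j = i
          · subst hj; simp
          · rw [Pi.mulSingle_eq_of_ne hj, h1 j hj]
        show MonoidHom.mulSingle (fun _ : Fin d => Γ) i (((g : ↥G) : Fin d → Γ) i) ∈ G
        show Pi.mulSingle i (((g : ↥G) : Fin d → Γ) i) ∈ G
        rw [heq]
        exact (g : ↥G).2
    have hrange : Nat.card ↥φ.range ≤ N ^ (d - 1) := by
      have h1 : Nat.card ↥φ.range ≤ Nat.card ({j : Fin d // j ≠ i} → Γ) :=
        Nat.card_le_card_of_injective Subtype.val Subtype.val_injective
      have h2 : Nat.card ({j : Fin d // j ≠ i} → Γ) = N ^ (d - 1) := by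
        rw [Nat.card_fun]
        congr 1
        rw [Nat.card_eq_fintype_card, Fintype.card_subtype_compl, Fintype.card_subtype_eq,
          Fintype.card_fin]
      omega
    calc Nat.card ↥G = Nat.card (↥G ⧸ φ.ker) * Nat.card ↥φ.ker :=
          Subgroup.card_eq_card_quotient_mul_card_subgroup φ.ker
      _ = Nat.card ↥φ.range * Nat.card ↥φ.ker := by
          rw [Nat.card_congr (QuotientGroup.quotientKerEquivRange φ).toEquiv]
      _ ≤ N ^ (d - 1) * Nat.card ↥(K i) := Nat.mul_le_mul hrange hker
      _ = Nat.card ↥(K i) * N ^ (d - 1) := Nat.mul_comm _ _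
  -- real bound for each K i
  have hKi : ∀ i : Fin d, (N : ℝ) ^ ((1 : ℝ) - ε) ≤ (Nat.card ↥(K i) : ℝ) := by
    intro i
    have h1 : (N : ℝ) ^ ((d : ℝ) - ε) ≤ (Nat.card ↥(K i) : ℝ) * (N : ℝ) ^ ((d : ℝ) - 1) := by
      calc (N : ℝ) ^ ((d : ℝ) - ε) ≤ (Nat.card ↥G : ℝ) := hG
        _ ≤ (Nat.card ↥(K i) : ℝ) * (N : ℝ) ^ (d - 1 : ℕ) := by
            exact_mod_cast Nat.cast_le.mpr (key i)
        _ = (Nat.card ↥(K i) : ℝ) * (N : ℝ) ^ ((d : ℝ) - 1) := by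
            rw [← Real.rpow_natCast (N : ℝ) (d - 1)]
            congr 2
            rw [Nat.cast_sub hd, Nat.cast_one]
    have h2 : (N : ℝ) ^ ((d : ℝ) - ε) = (N : ℝ) ^ ((1 : ℝ) - ε) * (N : ℝ) ^ ((d : ℝ) - 1) := by
      rw [← Real.rpow_add hNpos]; ring_nf
    rw [h2] at h1
    have h3 : (0 : ℝ) < (N : ℝ) ^ ((d : ℝ) - 1) := Real.rpow_pos_of_pos hNpos _
    exact le_of_mul_le_mul_right h1 h3
  -- card of pi
  have hpi : Nat.card ↥(Subgroup.pi Set.univ K) = ∏ i : Fin d, Nat.card ↥(K i) := by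
    rw [← Nat.card_pi]
    refine Nat.card_congr ⟨fun x i => ⟨x.1 i, x.2 i (Set.mem_univ i)⟩,
      fun y => ⟨fun i => (y i : Γ), fun i _ => (y i).2⟩, fun x => rfl, fun y => rfl⟩
  rw [hpi]
  calc (N : ℝ) ^ ((d : ℝ) * (1 - ε)) = ((N : ℝ) ^ ((1 : ℝ) - ε)) ^ (d : ℕ) := by
        rw [mul_comm, Real.rpow_mul (le_of_lt hNpos), Real.rpow_natCast]
    _ = ∏ _i : Fin d, (N : ℝ) ^ ((1 : ℝ) - ε) := by
        rw [Finset.prod_const, Finset.card_univ, Fintype.card_fin]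
    _ ≤ ∏ i : Fin d, (Nat.card ↥(K i) : ℝ) :=
        Finset.prod_le_prod (fun i _ => Real.rpow_nonneg (le_of_lt hNpos) _) fun i _ => hKi i
    _ = ((∏ i : Fin d, Nat.card ↥(K i) : ℕ) : ℝ) := by push_cast; ring

/-- **Large subdirect products contain large direct products** (Lemma 8.4).
Let `G` be a subgroup of the direct power `Γ_n(p)^d` with `|G| ≥ |Γ_n(p)|^{d-ε}`.
Then `G` contains a direct product `H = H_1 × ⋯ × H_d` (with `H_i` in the `i`-th
coordinate) with `|H| ≥ |Γ_n(p)|^{d(1-ε)}`. -/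
theorem subdirect_contains_large_direct_product (p n d : ℕ) (hp : p.Prime)
    (hn : 1 ≤ n) (hd : 1 ≤ d) (ε : ℝ) (hε : 0 ≤ ε)
    (G : Subgroup (Fin d → ↥(GammaLevel p n)))
    (hG : (Nat.card ↥(GammaLevel p n) : ℝ) ^ ((d : ℝ) - ε) ≤ (Nat.card ↥G : ℝ)) :
    ∃ H : Fin d → Subgroup ↥(GammaLevel p n),
      Subgroup.pi Set.univ H ≤ G ∧
        (Nat.card ↥(GammaLevel p n) : ℝ) ^ ((d : ℝ) * (1 - ε)) ≤
          (Nat.card ↥(Subgroup.pi Set.univ H) : ℝ) := by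
  exact subdirect_aux p n d hp hn hd ε hε G hG

end TreeWreath
end
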